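/- arXiv:2112.08229 — 7 statements merged into one kernel-verified Lean document; each statement's English description precedes it below -/
import Mathlib

section
/- Let F be a field and P a nonzero m×n matrix polynomial over F of degree d (so every entry has degree at most d and some entry has degree exactly d), and let g ≥ d be a natural number. Then: (i) λ does not divide D_1(rev_d P), a gcd of the entries of rev_d P; (ii) the multiplicity of λ in D_1(rev_g P) equals g − d; and (iii) for every j with 1 ≤ j ≤ min(m,n) such that some j×j minor of P is nonzero, the multiplicity of λ in D_j(rev_g P) equals j·(g − d) plus the multiplicity of λ in D_j(rev_d P). -/
open Polynomial

/-- Grade-`g` reversal of a matrix polynomial, taken entrywise: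
the `(i,j)` entry is `∑_{t=0}^{g} (coeff of λ^t in P i j) · λ^(g-t)`. -/
noncomputable def revMat {F : Type*} [Field F] {m n : ℕ} (g : ℕ)
    (P : Matrix (Fin m) (Fin n) F[X]) : Matrix (Fin m) (Fin n) F[X] :=
  Matrix.of fun i j => ∑ t ∈ Finset.range (g + 1), C ((P i j).coeff t) * X ^ (g - t)

/-- `D_j(P)`: a gcd of the determinants of all `j × j` submatrices of `P`
(non-injective index selections contribute `0`, which does not affect the gcd). -/
noncomputable def minorGcd {F : Type*} [Field F] {m n : ℕ} (j : ℕ)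
    (P : Matrix (Fin m) (Fin n) F[X]) : F[X] :=
  letI := Classical.decEq F
  Finset.univ.gcd fun fg : (Fin j → Fin m) × (Fin j → Fin n) => (P.submatrix fg.1 fg.2).det

/-- The multiplicity of `f` in `h`: the largest `t` with `f ^ t ∣ h`. -/
noncomputable def polyMult {F : Type*} [Field F] (f h : F[X]) : ℕ :=
  sSup {t : ℕ | f ^ t ∣ h}

section Aux

variable {F : Type*} [Field F]

private lemma reflect_sum' {ι : Type*} (s : Finset ι) (f : ι → F[X]) (N : ℕ) :
    reflect N (∑ i ∈ s, f i) = ∑ i ∈ s, reflect N (f i) := by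
  induction s using Finset.cons_induction with
  | empty => simp
  | cons a s ha ih => simp [Finset.sum_cons, reflect_add, ih]

private lemma revMat_entry {m n : ℕ} (d : ℕ) (P : Matrix (Fin m) (Fin n) F[X])
    (h : ∀ i j, (P i j).degree ≤ (d : WithBot ℕ)) (i : Fin m) (j : Fin n) :
    revMat d P i j = reflect d (P i j) := by
  have hnd : (P i j).natDegree < d + 1 :=
    Nat.lt_succ_of_le (natDegree_le_iff_degree_le.2 (h i j))
  conv_rhs => rw [(P i j).as_sum_range' (d + 1) hnd]
  rw [reflect_sum']
  show (∑ t ∈ Finset.range (d + 1), C ((P i j).coeff t) * X ^ (d - t)) = _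
  refine Finset.sum_congr rfl fun t ht => ?_
  rw [Finset.mem_range] at ht
  rw [← C_mul_X_pow_eq_monomial, reflect_C_mul_X_pow, revAt_le (Nat.lt_succ_iff.1 ht)]

private lemma reflect_prod' (d : ℕ) : ∀ (j : ℕ) (f : Fin j → F[X]),
    (∀ i, (f i).natDegree ≤ d) →
    reflect (j * d) (∏ i, f i) = ∏ i, reflect d (f i) := by
  intro j
  induction j with
  | zero => intro f _; simp
  | succ k ih =>
    intro f hf
    rw [Fin.prod_univ_succ, Fin.prod_univ_succ]
    have hprod : (∏ i : Fin k, f i.succ).natDegree ≤ k * d := by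
      refine le_trans (natDegree_prod_le _ _) ?_
      calc ∑ i : Fin k, (f i.succ).natDegree ≤ ∑ _i : Fin k, d :=
            Finset.sum_le_sum fun i _ => hf i.succ
        _ = k * d := by simp [Finset.sum_const, mul_comm]
    have hkd : (k + 1) * d = d + k * d := by ring
    rw [hkd, reflect_mul _ _ (hf 0) hprod, ih _ (fun i => hf i.succ)]

private lemma det_reflect {j d : ℕ} (Q : Matrix (Fin j) (Fin j) F[X])
    (hQ : ∀ a b, (Q a b).natDegree ≤ d) :
    (Matrix.of fun a b => reflect d (Q a b)).det = reflect (j * d) Q.det := by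
  rw [Matrix.det_apply', Matrix.det_apply', reflect_sum']
  refine Finset.sum_congr rfl fun σ _ => ?_
  have hcast : ((Equiv.Perm.sign σ : ℤ) : F[X]) = C ((Equiv.Perm.sign σ : ℤ) : F) := by
    rw [C_eq_intCast]
  rw [hcast, reflect_C_mul, reflect_prod' d j (fun i => Q (σ i) i) (fun i => hQ _ _)]
  simp [Fintype.card_fin]

private lemma revMat_g_eq {m n : ℕ} (d g : ℕ) (hgd : d ≤ g)
    (P : Matrix (Fin m) (Fin n) F[X])
    (h : ∀ i j, (P i j).degree ≤ (d : WithBot ℕ)) :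
    revMat g P = (X ^ (g - d) : F[X]) • revMat d P := by
  refine Matrix.ext fun i j => ?_
  simp only [Matrix.smul_apply, smul_eq_mul]
  show (∑ t ∈ Finset.range (g + 1), C ((P i j).coeff t) * X ^ (g - t))
      = X ^ (g - d) * ∑ t ∈ Finset.range (d + 1), C ((P i j).coeff t) * X ^ (d - t)
  rw [Finset.mul_sum]
  rw [← Finset.sum_subset (Finset.range_subset_range.2 (by omega) :
      Finset.range (d + 1) ⊆ Finset.range (g + 1))]
  · refine Finset.sum_congr rfl fun t ht => ?_
    rw [Finset.mem_range] at ht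
    have ht' : t ≤ d := Nat.lt_succ_iff.1 ht
    rw [mul_comm (X ^ (g - d)) _, mul_assoc, ← pow_add]
    congr 2
    omega
  · intro t ht htd
    rw [Finset.mem_range] at ht htd
    have : (P i j).degree < (t : WithBot ℕ) :=
      lt_of_le_of_lt (h i j) (by exact_mod_cast Nat.cast_lt.2 (by omega))
    rw [coeff_eq_zero_of_degree_lt this]
    simp

private lemma minorGcd_smul {m n : ℕ} (j k : ℕ) (M : Matrix (Fin m) (Fin n) F[X]) :
    minorGcd j ((X ^ k : F[X]) • M) = X ^ (j * k) * minorGcd j M := by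
  letI := Classical.decEq F
  unfold minorGcd
  have hdet : ∀ fg : (Fin j → Fin m) × (Fin j → Fin n),
      (((X ^ k : F[X]) • M).submatrix fg.1 fg.2).det
        = X ^ (j * k) * (M.submatrix fg.1 fg.2).det := by
    intro fg
    have hsub : ((X ^ k : F[X]) • M).submatrix fg.1 fg.2
        = (X ^ k : F[X]) • (M.submatrix fg.1 fg.2) := rfl
    rw [hsub, Matrix.det_smul, Fintype.card_fin, ← pow_mul, mul_comm k j]
  rw [Finset.gcd_congr rfl fun fg _ => hdet fg, Finset.gcd_mul_left,
    (monic_X.pow (j * k)).normalize_eq_self]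

private lemma polyMult_X_eq (h : F[X]) (h0 : h ≠ 0) :
    polyMult X h = rootMultiplicity 0 h := by
  unfold polyMult
  have hset : {t : ℕ | X ^ t ∣ h} = Set.Iic (rootMultiplicity 0 h) := by
    ext t
    simp only [Set.mem_setOf_eq, Set.mem_Iic]
    rw [le_rootMultiplicity_iff h0, C_0, sub_zero]
  rw [hset, csSup_Iic]

private lemma polyMult_X_pow_mul (k : ℕ) (h : F[X]) (h0 : h ≠ 0) :
    polyMult X (X ^ k * h) = k + polyMult X h := by
  have hne : (X : F[X]) ^ k * h ≠ 0 := mul_ne_zero (pow_ne_zero _ X_ne_zero) h0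
  rw [polyMult_X_eq _ hne, polyMult_X_eq _ h0, rootMultiplicity_mul hne]
  congr 1
  have := rootMultiplicity_X_sub_C_pow (0 : F) k
  simpa using this

private lemma polyMult_X_zero (h : F[X]) (hnd : ¬ X ∣ h) : polyMult X h = 0 := by
  have h0 : h ≠ 0 := by rintro rfl; exact hnd (dvd_zero _)
  rw [polyMult_X_eq _ h0, rootMultiplicity_eq_zero]
  intro hr
  exact hnd (X_dvd_iff.2 (by rw [coeff_zero_eq_eval_zero]; exact hr))

private lemma minorGcd_dvd {m n j : ℕ} (M : Matrix (Fin m) (Fin n) F[X])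
    (r : Fin j → Fin m) (c : Fin j → Fin n) :
    minorGcd j M ∣ (M.submatrix r c).det := by
  letI := Classical.decEq F
  unfold minorGcd
  exact Finset.gcd_dvd
    (f := fun fg : (Fin j → Fin m) × (Fin j → Fin n) => (M.submatrix fg.1 fg.2).det)
    (Finset.mem_univ (r, c))

private lemma minorGcd_zero_elim {m n j : ℕ} (M : Matrix (Fin m) (Fin n) F[X])
    (h0 : minorGcd j M = 0) (r : Fin j → Fin m) (c : Fin j → Fin n) :
    (M.submatrix r c).det = 0 := by
  letI := Classical.decEq F
  unfold minorGcd at h0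
  exact Finset.gcd_eq_zero_iff.1 h0 ((r, c) : (Fin j → Fin m) × (Fin j → Fin n))
    (Finset.mem_univ _)

end Aux

theorem statement_0 {F : Type*} [Field F] {m n : ℕ}
    (P : Matrix (Fin m) (Fin n) F[X]) (hP : P ≠ 0) (d g : ℕ)
    (hdle : ∀ i j, (P i j).degree ≤ (d : WithBot ℕ))
    (hdeq : ∃ i j, (P i j).degree = (d : WithBot ℕ))
    (hgd : d ≤ g) :
    ¬ (X ∣ minorGcd 1 (revMat d P)) ∧
    polyMult X (minorGcd 1 (revMat g P)) = g - d ∧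
    (∀ j : ℕ, 1 ≤ j → j ≤ m → j ≤ n →
      (∃ (r : Fin j → Fin m) (c : Fin j → Fin n), (P.submatrix r c).det ≠ 0) →
      polyMult X (minorGcd j (revMat g P))
        = j * (g - d) + polyMult X (minorGcd j (revMat d P))) := by
  letI := Classical.decEq F
  -- Part (i)
  have part1 : ¬ (X ∣ minorGcd 1 (revMat d P)) := by
    obtain ⟨i0, j0, hij⟩ := hdeq
    intro hdvd
    have hgd0 : minorGcd 1 (revMat d P) ∣
        ((revMat d P).submatrix (fun _ : Fin 1 => i0) (fun _ : Fin 1 => j0)).det :=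
      minorGcd_dvd (revMat d P) _ _
    have hXdvd : X ∣ (revMat d P) i0 j0 := by
      have := hdvd.trans hgd0
      rwa [Matrix.det_fin_one, Matrix.submatrix_apply] at this
    rw [X_dvd_iff] at hXdvd
    have hc : (revMat d P i0 j0).coeff 0 = (P i0 j0).coeff d := by
      show (∑ t ∈ Finset.range (d + 1), C ((P i0 j0).coeff t) * X ^ (d - t)).coeff 0 = _
      rw [finset_sum_coeff]
      rw [Finset.sum_eq_single d]
      · simp
      · intro t ht hne
        rw [Finset.mem_range] at ht
        have hdt : d - t ≠ 0 := by omega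
        simp [coeff_C_mul, coeff_X_pow, Ne.symm hdt]
      · intro hd; exact absurd (Finset.self_mem_range_succ d) hd
    rw [hc] at hXdvd
    exact coeff_ne_zero_of_eq_degree hij hXdvd
  have hD1ne : minorGcd 1 (revMat d P) ≠ 0 := fun h0 => part1 (h0 ▸ dvd_zero X)
  have hrev : revMat g P = (X ^ (g - d) : F[X]) • revMat d P := revMat_g_eq d g hgd P hdle
  refine ⟨part1, ?_, ?_⟩
  · -- Part (ii)
    rw [hrev, minorGcd_smul, polyMult_X_pow_mul _ _ hD1ne, polyMult_X_zero _ part1,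
      one_mul, add_zero]
  · -- Part (iii)
    intro j hj1 hjm hjn ⟨r, c, hrc⟩
    have hDd : minorGcd j (revMat d P) ≠ 0 := by
      intro h0
      have hz := minorGcd_zero_elim (revMat d P) h0 r c
      apply hrc
      have heq : (revMat d P).submatrix r c
          = Matrix.of (fun a b => reflect d ((P.submatrix r c) a b)) := by
        exact Matrix.ext fun a b => revMat_entry d P hdle (r a) (c b)
      rw [heq, det_reflect (P.submatrix r c)
        (fun a b => natDegree_le_iff_degree_le.2 (hdle (r a) (c b)))] at hz
      exact reflect_eq_zero_iff.1 hz
    rw [hrev, minorGcd_smul, polyMult_X_pow_mul _ _ hDd]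
end

section
/- Let F be a field and P a regular n×n matrix polynomial over F all of whose entries have degree at most g. Then deg(det P) + v = g·n, where v is the multiplicity of λ as a factor of det(rev_g P). In particular, if g equals the degree d of P and the leading coefficient of P is invertible (i.e. P is strictly regular), then deg(det P) = d·n. -/
open Polynomial

/-- The coefficient matrix of `λ^d` in the entries of `P` (the leading coefficient
when `P` has degree `d`). -/
def leadMat {F : Type*} [Field F] {n : ℕ} (P : Matrix (Fin n) (Fin n) F[X]) (d : ℕ) :
    Matrix (Fin n) (Fin n) F :=
  Matrix.of fun i j => (P i j).coeff d

/-!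
Entrywise, `rev_g` is `Polynomial.reflect g`, and reflection is multiplicative once degrees are
bounded, so `det (rev_g P) = reflect (g n) (det P)`. Reflecting in degree `N ≥ deg h` turns the
degree of `h` into the trailing degree `N - deg h`, which is the multiplicity of `λ`.
For the strictly regular case, the coefficient of `λ^(g n)` in `det P` is the determinant of the
coefficient matrix of `λ^g`.
-/

namespace Polynomial

variable {R : Type*}

theorem reflect_sum [Semiring R] {ι : Type*} (s : Finset ι) (f : ι → R[X]) (N : ℕ) :
    reflect N (∑ i ∈ s, f i) = ∑ i ∈ s, reflect N (f i) :=
  map_sum (AddMonoidHom.mk ⟨reflect N, reflect_zero⟩ fun p q => reflect_add p q N) f s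

theorem reflect_prod_of_natDegree_le [CommSemiring R] {ι : Type*} (s : Finset ι) (f : ι → R[X])
    {g : ℕ} (h : ∀ i ∈ s, (f i).natDegree ≤ g) :
    reflect (g * s.card) (∏ i ∈ s, f i) = ∏ i ∈ s, reflect g (f i) := by
  classical
  induction s using Finset.induction with
  | empty => simp [reflect_one]
  | @insert a s ha ih =>
    have hprod : (∏ i ∈ s, f i).natDegree ≤ g * s.card :=
      (natDegree_prod_le s f).trans <| by
        simpa [mul_comm] using Finset.sum_le_card_nsmul s _ g
          fun i hi => h i (Finset.mem_insert_of_mem hi)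
    rw [Finset.prod_insert ha, Finset.prod_insert ha, Finset.card_insert_of_notMem ha,
      mul_add_one, add_comm, reflect_mul _ _ (h a (Finset.mem_insert_self a s)) hprod,
      ih fun i hi => h i (Finset.mem_insert_of_mem hi)]

theorem natTrailingDegree_reflect [Semiring R] {N : ℕ} {p : R[X]} (hp : p ≠ 0)
    (hN : p.natDegree ≤ N) : (reflect N p).natTrailingDegree = N - p.natDegree := by
  have hcoeff : (reflect N p).coeff (N - p.natDegree) ≠ 0 := by
    rw [coeff_reflect, revAt_le (Nat.sub_le N _), Nat.sub_sub_self hN]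
    exact mt leadingCoeff_eq_zero.mp hp
  refine le_antisymm (natTrailingDegree_le_of_ne_zero hcoeff)
    (le_natTrailingDegree (fun h => hcoeff (by simp [h])) fun m hm => ?_)
  rw [coeff_reflect, revAt_le (hm.le.trans (Nat.sub_le N _))]
  exact coeff_eq_zero_of_natDegree_lt (by omega)

theorem sum_range_C_coeff_mul_X_pow_eq_reflect [Semiring R] {g : ℕ} {p : R[X]}
    (hp : p.natDegree ≤ g) :
    ∑ t ∈ Finset.range (g + 1), C (p.coeff t) * X ^ (g - t) = reflect g p := by
  conv_rhs => rw [p.as_sum_range' (g + 1) (Nat.lt_succ_of_le hp), reflect_sum]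
  refine Finset.sum_congr rfl fun t ht => ?_
  rw [← C_mul_X_pow_eq_monomial, reflect_C_mul_X_pow,
    revAt_le (Nat.lt_succ_iff.mp (Finset.mem_range.mp ht))]

end Polynomial

namespace Matrix

variable {R ι : Type*} [CommRing R] [Fintype ι] [DecidableEq ι]

theorem natDegree_det_le_of_natDegree_le {A : Matrix ι ι R[X]} {g : ℕ}
    (h : ∀ i j, (A i j).natDegree ≤ g) : A.det.natDegree ≤ g * Fintype.card ι := by
  rw [det_apply]
  refine (natDegree_sum_le_of_forall_le _ _ fun σ _ => ?_)
  rw [Units.smul_def, zsmul_eq_mul]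
  refine natDegree_mul_le.trans ?_
  rw [natDegree_intCast, zero_add]
  refine (natDegree_prod_le _ _).trans ?_
  simpa [mul_comm] using Finset.sum_le_card_nsmul Finset.univ _ g fun i _ => h (σ i) i

theorem det_map_reflect {A : Matrix ι ι R[X]} {g : ℕ} (h : ∀ i j, (A i j).natDegree ≤ g) :
    (A.map (reflect g)).det = reflect (g * Fintype.card ι) A.det := by
  simp only [det_apply, reflect_sum, Units.smul_def, zsmul_eq_mul, ← C_eq_intCast,
    reflect_C_mul, map_apply]
  refine Finset.sum_congr rfl fun σ _ => ?_
  rw [← Finset.card_univ, reflect_prod_of_natDegree_le _ _ fun i _ => h (σ i) i]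

theorem coeff_det_of_natDegree_le {A : Matrix ι ι R[X]} {g : ℕ}
    (h : ∀ i j, (A i j).natDegree ≤ g) :
    A.det.coeff (g * Fintype.card ι) = (A.map fun p => p.coeff g).det := by
  simp only [det_apply, finsetSum_coeff, Units.smul_def, zsmul_eq_mul, ← C_eq_intCast,
    coeff_C_mul, map_apply]
  refine Finset.sum_congr rfl fun σ _ => ?_
  rw [mul_comm g, ← Finset.card_univ, coeff_prod_of_natDegree_le (s := Finset.univ) _ g fun i _ => h (σ i) i]

end Matrix

theorem polyMult_X_eq_natTrailingDegree {F : Type*} [Field F] {h : F[X]} (h0 : h ≠ 0) :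
    polyMult X h = h.natTrailingDegree := by
  have : {t : ℕ | X ^ t ∣ h} = Set.Iic h.natTrailingDegree := by
    ext t
    simp only [Set.mem_ofPred_eq, Set.mem_Iic, X_pow_dvd_iff]
    refine ⟨fun ht => ?_, fun ht d hd => coeff_eq_zero_of_lt_natTrailingDegree (hd.trans_le ht)⟩
    by_contra hlt
    exact h0 (trailingCoeff_eq_zero.mp (ht _ (not_le.mp hlt)))
  rw [polyMult, this, csSup_Iic]

theorem revMat_eq_map_reflect {F : Type*} [Field F] {m n : ℕ} {g : ℕ}
    {P : Matrix (Fin m) (Fin n) F[X]} (h : ∀ i j, (P i j).natDegree ≤ g) :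
    revMat g P = P.map (reflect g) :=
  Matrix.ext fun i j => sum_range_C_coeff_mul_X_pow_eq_reflect (h i j)

theorem statement_1 {F : Type*} [Field F] {n : ℕ}
    (P : Matrix (Fin n) (Fin n) F[X]) (g : ℕ)
    (hreg : P.det ≠ 0)
    (hdeg : ∀ i j, (P i j).degree ≤ (g : WithBot ℕ)) :
    (P.det).natDegree + polyMult X ((revMat g P).det) = g * n ∧
    ((∃ i j, (P i j).degree = (g : WithBot ℕ)) ∧ IsUnit (leadMat P g).det →
      (P.det).natDegree = g * n) := by
  have hnat : ∀ i j, (P i j).natDegree ≤ g := fun i j => natDegree_le_iff_degree_le.mpr (hdeg i j)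
  have hle : P.det.natDegree ≤ g * n := by
    simpa using Matrix.natDegree_det_le_of_natDegree_le hnat
  have hrev : (revMat g P).det = reflect (g * n) P.det := by
    simpa [revMat_eq_map_reflect hnat] using Matrix.det_map_reflect hnat
  refine ⟨?_, fun ⟨_, hunit⟩ => le_antisymm hle (le_natDegree_of_ne_zero ?_)⟩
  · rw [hrev, polyMult_X_eq_natTrailingDegree (reflect_eq_zero_iff.not.mpr hreg),
      natTrailingDegree_reflect hreg hle]
    omega
  · simpa using (Matrix.coeff_det_of_natDegree_le hnat).trans_ne hunit.ne_zero
end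

section
/- Let F be a field, d and n positive integers, and Q a regular n×n matrix polynomial over F with deg(det Q) = d·n. Then there exists a strictly regular n×n matrix polynomial P over F of degree d that is unimodularly equivalent to Q. -/
/-!
A regular matrix polynomial is unimodularly equivalent to a column reduced one: with column degree
bounds `γ`, the matrix of `λ ^ γ j`-coefficients of the columns is invertible, which amounts to
`deg det = ∑ j, γ j`. As long as that coefficient matrix is singular, a kernel vector `c`, scaled by
powers of `λ`, gives a column operation lowering the bound of the column where `c` is supported
with largest `γ`.

The column degrees of a column reduced matrix can then be balanced while keeping their sum
`deg det`. Normalise the coefficient matrix to `1`; if `γ i + 1 < γ m`, adding `λ` times row `i`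
to row `m` raises the bound of column `i` by one and makes the coefficient matrix singular with a
kernel vector supported on `{i, m}`, so the column step lowers column `m`. Once every column
degree is `d`, the coefficient matrix is the leading coefficient.
-/

open Polynomial

/-- Unimodular equivalence of square matrix polynomials. -/
def UnimodEquiv {F : Type*} [Field F] {n : ℕ}
    (P Q : Matrix (Fin n) (Fin n) F[X]) : Prop :=
  ∃ U V : Matrix (Fin n) (Fin n) F[X], IsUnit U.det ∧ IsUnit V.det ∧ Q = U * P * V

/-- `P` is a nonzero matrix polynomial of degree `d`. -/
def MatDegEq {F : Type*} [Field F] {m n : ℕ} (P : Matrix (Fin m) (Fin n) F[X]) (d : ℕ) : Prop :=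
  (∀ i j, (P i j).degree ≤ (d : WithBot ℕ)) ∧ ∃ i j, (P i j).degree = (d : WithBot ℕ)

namespace Polynomial

variable {R : Type*} [CommSemiring R]

theorem coeff_prod_sum_of_natDegree_le {ι : Type*} (s : Finset ι) (f : ι → R[X]) (γ : ι → ℕ)
    (h : ∀ i ∈ s, (f i).natDegree ≤ γ i) :
    (∏ i ∈ s, f i).coeff (∑ i ∈ s, γ i) = ∏ i ∈ s, (f i).coeff (γ i) := by
  classical
  induction s using Finset.induction_on with
  | empty => simp
  | insert a s ha ih =>
    rw [Finset.prod_insert ha, Finset.sum_insert ha, Finset.prod_insert ha,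
      coeff_mul_add_eq_of_natDegree_le (h a (s.mem_insert_self a)),
      ih fun i hi ↦ h i (s.mem_insert_of_mem hi)]
    exact (natDegree_prod_le s f).trans
      (Finset.sum_le_sum fun i hi ↦ h i (s.mem_insert_of_mem hi))

theorem natDegree_X_mul_le_of_coeff_eq_zero {p : R[X]} {N : ℕ} (hp : p.natDegree ≤ N)
    (hN : p.coeff N = 0) : (X * p).natDegree ≤ N := by
  rw [natDegree_le_iff_coeff_eq_zero] at hp ⊢
  intro k hk
  obtain ⟨k, rfl⟩ : ∃ k', k = k' + 1 := ⟨k - 1, by omega⟩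
  rw [coeff_X_mul]
  rcases (Nat.le_of_lt_succ hk).eq_or_lt with rfl | hlt
  · exact hN
  · exact hp k hlt

end Polynomial

theorem Fintype.sum_update_add {ι M : Type*} [Fintype ι] [DecidableEq ι] [AddCommMonoid M]
    (f : ι → M) (i : ι) (b : M) : ∑ j, Function.update f i b j + f i = ∑ j, f j + b := by
  rw [Finset.sum_update_of_mem (Finset.mem_univ i),
    Finset.sum_eq_add_sum_sdiff_singleton_of_mem (Finset.mem_univ i) f]
  abel

theorem Fintype.sum_update_update_eq {ι : Type*} [Fintype ι] [DecidableEq ι] (γ : ι → ℕ)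
    {i m : ι} (him : i ≠ m) (hm : 0 < γ m) :
    ∑ j, Function.update (Function.update γ i (γ i + 1)) m (γ m - 1) j = ∑ j, γ j := by
  have h₁ := Fintype.sum_update_add γ i (γ i + 1)
  have h₂ := Fintype.sum_update_add (Function.update γ i (γ i + 1)) m (γ m - 1)
  rw [Function.update_of_ne him.symm] at h₂
  omega

theorem Fintype.exists_lt_lt_of_sum_eq {ι : Type*} [Fintype ι] {γ : ι → ℕ} {d : ℕ}
    (hsum : ∑ j, γ j = Fintype.card ι * d) (hγ : γ ≠ fun _ ↦ d) :
    ∃ i m, γ i < d ∧ d < γ m := by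
  have hconst : ∑ j, γ j = ∑ _j : ι, d := by simp [hsum]
  obtain ⟨i, hi⟩ : ∃ i, γ i < d := by
    by_contra! H
    exact hγ (funext fun j ↦
      ((Finset.sum_eq_sum_iff_of_le fun j _ ↦ H j).1 hconst.symm j (Finset.mem_univ j)).symm)
  obtain ⟨m, hm⟩ : ∃ m, d < γ m := by
    by_contra! H
    exact hγ (funext fun j ↦
      (Finset.sum_eq_sum_iff_of_le fun j _ ↦ H j).1 hconst j (Finset.mem_univ j))
  exact ⟨i, m, hi, hm⟩

section UnimodEquiv

open Matrix

variable {F : Type*} [Field F] {n : ℕ} {P Q R : Matrix (Fin n) (Fin n) F[X]}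

protected theorem UnimodEquiv.refl (P : Matrix (Fin n) (Fin n) F[X]) : UnimodEquiv P P :=
  ⟨1, 1, by simp, by simp, by simp⟩

protected theorem UnimodEquiv.trans (h₁ : UnimodEquiv P Q) (h₂ : UnimodEquiv Q R) :
    UnimodEquiv P R := by
  obtain ⟨U, V, hU, hV, rfl⟩ := h₁
  obtain ⟨U', V', hU', hV', rfl⟩ := h₂
  refine ⟨U' * U, V * V', ?_, ?_, by simp only [Matrix.mul_assoc]⟩
  · rw [det_mul]; exact hU'.mul hU
  · rw [det_mul]; exact hV.mul hV'

protected theorem UnimodEquiv.symm (h : UnimodEquiv P Q) : UnimodEquiv Q P := by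
  obtain ⟨U, V, hU, hV, rfl⟩ := h
  refine ⟨U⁻¹, V⁻¹, isUnit_nonsing_inv_det U hU, isUnit_nonsing_inv_det V hV, ?_⟩
  rw [Matrix.mul_assoc U, ← Matrix.mul_assoc U⁻¹, nonsing_inv_mul U hU, Matrix.one_mul,
    Matrix.mul_assoc, mul_nonsing_inv V hV, Matrix.mul_one]

theorem UnimodEquiv.associated_det (h : UnimodEquiv P Q) : Associated P.det Q.det := by
  obtain ⟨U, V, hU, hV, rfl⟩ := h
  rw [det_mul, det_mul]
  exact (associated_unit_mul_right _ _ hU).trans (associated_mul_unit_right _ _ hV)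

theorem unimodEquiv_mul_left (P : Matrix (Fin n) (Fin n) F[X])
    {U : Matrix (Fin n) (Fin n) F[X]} (hU : IsUnit U.det) : UnimodEquiv P (U * P) :=
  ⟨U, 1, hU, by simp, by simp⟩

theorem unimodEquiv_mul_right (P : Matrix (Fin n) (Fin n) F[X])
    {V : Matrix (Fin n) (Fin n) F[X]} (hV : IsUnit V.det) : UnimodEquiv P (P * V) :=
  ⟨1, V, by simp, hV, by simp⟩

end UnimodEquiv

namespace Matrix

theorem det_updateCol_one {ι R : Type*} [Fintype ι] [DecidableEq ι] [CommRing R] (j : ι)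
    (w : ι → R) : ((1 : Matrix ι ι R).updateCol j w).det = w j := by
  simpa [one_apply] using det_updateCol_sum (1 : Matrix ι ι R) j w

section CommRing

variable {ι R : Type*} [CommRing R]

def colLeadCoeff (T : Matrix ι ι R[X]) (γ : ι → ℕ) : Matrix ι ι R :=
  of fun i j ↦ (T i j).coeff (γ j)

def ColDegLE (T : Matrix ι ι R[X]) (γ : ι → ℕ) : Prop :=
  ∀ i j, (T i j).natDegree ≤ γ j

def IsColReduced [Fintype ι] [DecidableEq ι] (T : Matrix ι ι R[X]) (γ : ι → ℕ) : Prop :=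
  T.ColDegLE γ ∧ (T.colLeadCoeff γ).det ≠ 0

variable {T : Matrix ι ι R[X]} {γ : ι → ℕ}

theorem ColDegLE.update_pred [DecidableEq ι] {j : ι} (h : T.ColDegLE γ)
    (hj : ∀ i, (T i j).coeff (γ j) = 0) : T.ColDegLE (Function.update γ j (γ j - 1)) := by
  intro i k
  rcases eq_or_ne k j with rfl | hk
  · simpa using natDegree_le_pred (h i k) (hj i)
  · simpa [hk] using h i k

variable [Fintype ι]

theorem colLeadCoeff_map_C_mul (A : Matrix ι ι R) (T : Matrix ι ι R[X]) (γ : ι → ℕ) :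
    (A.map C * T).colLeadCoeff γ = A * T.colLeadCoeff γ := by
  ext i j
  simp [colLeadCoeff, mul_apply, finsetSum_coeff]

theorem ColDegLE.map_C_mul (h : T.ColDegLE γ) (A : Matrix ι ι R) : (A.map C * T).ColDegLE γ :=
  fun _ j ↦ natDegree_sum_le_of_forall_le _ _ fun s _ ↦ (natDegree_C_mul_le _ _).trans (h s j)

variable [DecidableEq ι]

theorem ColDegLE.natDegree_det_le (h : T.ColDegLE γ) : T.det.natDegree ≤ ∑ j, γ j := by
  rw [det_apply]
  refine natDegree_sum_le_of_forall_le _ _ fun σ _ ↦ ?_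
  exact (natDegree_smul_le _ _).trans
    ((natDegree_prod_le _ _).trans (Finset.sum_le_sum fun j _ ↦ h _ _))

theorem ColDegLE.coeff_det (h : T.ColDegLE γ) :
    T.det.coeff (∑ j, γ j) = (T.colLeadCoeff γ).det := by
  rw [det_apply, det_apply, finsetSum_coeff]
  refine Finset.sum_congr rfl fun σ _ ↦ ?_
  rw [coeff_smul, coeff_prod_sum_of_natDegree_le _ _ _ fun j _ ↦ h _ _]
  rfl

end CommRing

section Field

variable {ι F : Type*} [Fintype ι] [DecidableEq ι] [Field F] {T T' : Matrix ι ι F[X]}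
  {γ γ' : ι → ℕ}

theorem ColDegLE.exists_mul_coeff_col_eq_zero (h : T.ColDegLE γ) {c : ι → F}
    (hc : T.colLeadCoeff γ *ᵥ c = 0) {j : ι} (hj : c j ≠ 0) (hmax : ∀ s, c s ≠ 0 → γ s ≤ γ j) :
    ∃ V : Matrix ι ι F[X], IsUnit V.det ∧ (T * V).ColDegLE γ ∧
      ∀ i, ((T * V) i j).coeff (γ j) = 0 := by
  set w : ι → F[X] := fun s ↦ C (c s) * X ^ (γ j - γ s)
  have hterm : ∀ i s, (T i s * w s).natDegree ≤ γ j ∧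
      (T i s * w s).coeff (γ j) = T.colLeadCoeff γ i s * c s := by
    intro i s
    by_cases hs : c s = 0
    · simp [w, hs]
    obtain ⟨e, he⟩ := Nat.exists_eq_add_of_le (hmax s hs)
    have hw : T i s * w s = C (c s) * (T i s * X ^ e) := by
      simp only [w, he, Nat.add_sub_cancel_left]; ring
    rw [hw, he, coeff_C_mul, coeff_mul_X_pow, mul_comm (c s)]
    refine ⟨(natDegree_C_mul_le _ _).trans (natDegree_mul_le.trans
      (add_le_add (h i s) (natDegree_X_pow_le e))), rfl⟩
  refine ⟨(1 : Matrix ι ι F[X]).updateCol j w, ?_, ?_, fun i ↦ ?_⟩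
  · simpa [det_updateCol_one, w] using hj
  · intro i k
    rw [mul_updateCol, Matrix.mul_one]
    rcases eq_or_ne k j with rfl | hk
    · simp only [updateCol_self, mulVec, dotProduct]
      exact natDegree_sum_le_of_forall_le _ _ fun s _ ↦ (hterm i s).1
    · simpa [updateCol_ne hk] using h i k
  · rw [mul_updateCol, Matrix.mul_one, updateCol_self]
    simp only [mulVec, dotProduct, finsetSum_coeff, fun s ↦ (hterm i s).2]
    exact congrFun hc i

theorem IsColReduced.det_ne_zero (h : T.IsColReduced γ) : T.det ≠ 0 := fun h0 ↦
  h.2 (by rw [← h.1.coeff_det, h0, coeff_zero])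

theorem IsColReduced.natDegree_det (h : T.IsColReduced γ) : T.det.natDegree = ∑ j, γ j :=
  natDegree_eq_of_le_of_coeff_ne_zero h.1.natDegree_det_le (h.1.coeff_det ▸ h.2)

theorem IsColReduced.of_associated (h : T.IsColReduced γ) (h' : T'.ColDegLE γ')
    (hsum : ∑ j, γ' j = ∑ j, γ j) (hdet : Associated T.det T'.det) : T'.IsColReduced γ' := by
  refine ⟨h', ?_⟩
  rw [← h'.coeff_det, hsum, ← h.natDegree_det,
    natDegree_eq_of_degree_eq (degree_eq_degree_of_associated hdet)]
  exact leadingCoeff_ne_zero.2 (hdet.ne_zero_iff.1 h.det_ne_zero)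

theorem ColDegLE.transvection_X_mul (h : T.ColDegLE γ) {i m : ι} (him : i ≠ m)
    (hrow : ∀ j ≠ i, (T i j).coeff (γ j) = 0) :
    (transvection m i X * T).ColDegLE (Function.update γ i (γ i + 1)) := by
  intro r j
  have hle : γ j ≤ Function.update γ i (γ i + 1) j := by
    rcases eq_or_ne j i with rfl | hj <;> simp [*]
  rcases eq_or_ne r m with rfl | hr
  · rw [transvection_mul_apply_same]
    refine natDegree_add_le_of_degree_le ((h r j).trans hle) ?_
    rcases eq_or_ne j i with rfl | hj
    · simpa [add_comm] using natDegree_mul_le.trans (add_le_add natDegree_X_le (h j j))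
    · exact (natDegree_X_mul_le_of_coeff_eq_zero (h i j) (hrow j hj)).trans hle
  · rw [transvection_mul_apply_of_ne m i r j hr]
    exact (h r j).trans hle

theorem ColDegLE.colLeadCoeff_transvection_X_mul_mulVec_eq_zero (h : T.ColDegLE γ)
    (hG : T.colLeadCoeff γ = 1) {i m : ι} (him : i ≠ m) :
    (transvection m i X * T).colLeadCoeff (Function.update γ i (γ i + 1)) *ᵥ
      (Pi.single m 1 - (transvection m i X * T).colLeadCoeff
        (Function.update γ i (γ i + 1)) m m • Pi.single i 1) = 0 := by
  set M := (transvection m i X * T).colLeadCoeff (Function.update γ i (γ i + 1))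
  have hG' : ∀ r j, (T r j).coeff (γ j) = (1 : Matrix ι ι F) r j := fun r j ↦ congrFun₂ hG r j
  have hcol_i : ∀ r, M r i = (Pi.single m 1 : ι → F) r := by
    intro r
    simp only [M, colLeadCoeff, of_apply, Function.update_self]
    have hri : (T r i).coeff (γ i + 1) = 0 :=
      coeff_eq_zero_of_natDegree_lt (Nat.lt_succ_of_le (h r i))
    rcases eq_or_ne r m with rfl | hr
    · rw [transvection_mul_apply_same, coeff_add, coeff_X_mul, hri, hG', one_apply_eq,
        Pi.single_eq_same, zero_add]
    · rw [transvection_mul_apply_of_ne m i r i hr, hri, Pi.single_eq_of_ne hr]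
  have hcol_m : ∀ r ≠ m, M r m = 0 := by
    intro r hr
    simp only [M, colLeadCoeff, of_apply, Function.update_of_ne him.symm]
    rw [transvection_mul_apply_of_ne m i r m hr, hG', one_apply_ne hr]
  ext r
  rw [mulVec_sub, mulVec_smul, mulVec_single_one, mulVec_single_one]
  rcases eq_or_ne r m with rfl | hr
  · simp [hcol_i]
  · simp [hcol_i, hcol_m r hr, Pi.single_eq_of_ne hr]

end Field

section SquareMatrixPolynomial

variable {F : Type*} [Field F] {n : ℕ} {T : Matrix (Fin n) (Fin n) F[X]} {γ : Fin n → ℕ}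

theorem exists_unimodEquiv_isColReduced (hT : T.det ≠ 0) :
    ∃ (T' : Matrix (Fin n) (Fin n) F[X]) (γ : Fin n → ℕ), UnimodEquiv T T' ∧ T'.IsColReduced γ := by
  suffices key : ∀ N (T : Matrix (Fin n) (Fin n) F[X]) (γ : Fin n → ℕ), T.det ≠ 0 →
      T.ColDegLE γ → ∑ j, γ j = N → ∃ T' γ', UnimodEquiv T T' ∧ T'.IsColReduced γ' from
    key _ T (fun j ↦ Finset.univ.sup fun i ↦ (T i j).natDegree) hT
      (fun i j ↦ Finset.le_sup (f := fun i ↦ (T i j).natDegree) (Finset.mem_univ i)) rfl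
  intro N
  induction N using Nat.strong_induction_on with
  | _ N ih =>
  intro T γ hT h hN
  classical
  by_cases hG : (T.colLeadCoeff γ).det = 0
  swap
  · exact ⟨T, γ, .refl T, h, hG⟩
  obtain ⟨c, hc0, hc⟩ := exists_mulVec_eq_zero_iff.2 hG
  obtain ⟨s₀, hs₀⟩ := Function.ne_iff.1 hc0
  obtain ⟨j, hj, hmax⟩ := Finset.exists_max_image {s | c s ≠ 0} γ ⟨s₀, by simpa using hs₀⟩
  obtain ⟨V, hV, hTV, hcoeff⟩ := h.exists_mul_coeff_col_eq_zero hc (by simpa using hj)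
    fun s hs ↦ hmax s (by simpa using hs)
  have hTV0 : (T * V).det ≠ 0 := by rw [det_mul]; exact mul_ne_zero hT hV.ne_zero
  have hγj : 0 < γ j := by
    refine Nat.pos_of_ne_zero fun h0 ↦ hTV0 (det_eq_zero_of_column_eq_zero j fun i ↦ ?_)
    rw [eq_C_of_natDegree_le_zero ((hTV i j).trans h0.le), ← h0, hcoeff i, C_0]
  have hlt : ∑ k, Function.update γ j (γ j - 1) k < N := by
    have := Fintype.sum_update_add γ j (γ j - 1)
    omega
  obtain ⟨T', γ', hT', hred⟩ := ih _ hlt (T * V) _ hTV0 (hTV.update_pred hcoeff) rfl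
  exact ⟨T', γ', (unimodEquiv_mul_right T hV).trans hT', hred⟩

theorem IsColReduced.exists_unimodEquiv_colLeadCoeff_eq_one (h : T.IsColReduced γ) :
    ∃ T₀, UnimodEquiv T T₀ ∧ T₀.ColDegLE γ ∧ T₀.colLeadCoeff γ = 1 := by
  have hG : IsUnit (T.colLeadCoeff γ).det := isUnit_iff_ne_zero.2 h.2
  have hA : IsUnit (((T.colLeadCoeff γ)⁻¹).map C).det := by
    rw [← RingHom.mapMatrix_apply, ← RingHom.map_det]
    exact (isUnit_nonsing_inv_det _ hG).map C
  refine ⟨_, unimodEquiv_mul_left T hA, h.1.map_C_mul _, ?_⟩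
  rw [colLeadCoeff_map_C_mul, nonsing_inv_mul _ hG]

theorem IsColReduced.exists_unimodEquiv_shift (h : T.IsColReduced γ) {i m : Fin n}
    (him : i ≠ m) (hγ : γ i + 1 < γ m) :
    ∃ T', UnimodEquiv T T' ∧
      T'.IsColReduced (Function.update (Function.update γ i (γ i + 1)) m (γ m - 1)) := by
  obtain ⟨T₀, hTT₀, h₀, hG₀⟩ := h.exists_unimodEquiv_colLeadCoeff_eq_one
  have hrow : ∀ j ≠ i, (T₀ i j).coeff (γ j) = 0 := fun j hj ↦
    (congrFun₂ hG₀ i j).trans (one_apply_ne hj.symm)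
  set γ₁ := Function.update γ i (γ i + 1)
  have hγ₁ : γ₁ m = γ m := Function.update_of_ne him.symm _ _
  set T₁ := transvection m i X * T₀
  have h₁ : T₁.ColDegLE γ₁ := h₀.transvection_X_mul him hrow
  set c : Fin n → F := Pi.single m 1 - T₁.colLeadCoeff γ₁ m m • Pi.single i 1
  have hc : ∀ s, c s ≠ 0 → γ₁ s ≤ γ₁ m := by
    intro s hs
    rcases eq_or_ne s i with rfl | hsi
    · simp only [γ₁, Function.update_self, hγ₁]; omega
    · rcases eq_or_ne s m with rfl | hsm
      · rfl
      · simp [c, hsi, hsm] at hs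
  obtain ⟨V, hV, h₂, hcoeff⟩ := h₁.exists_mul_coeff_col_eq_zero
    (h₀.colLeadCoeff_transvection_X_mul_mulVec_eq_zero hG₀ him) (j := m) (by simp [him.symm]) hc
  have hT₁ : IsUnit (transvection m i (X : F[X])).det := by
    rw [det_transvection_of_ne _ _ him.symm]; exact isUnit_one
  have hequiv : UnimodEquiv T (T₁ * V) :=
    (hTT₀.trans (unimodEquiv_mul_left T₀ hT₁)).trans (unimodEquiv_mul_right T₁ hV)
  refine ⟨T₁ * V, hequiv, h.of_associated ?_ (Fintype.sum_update_update_eq γ him (by omega))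
    hequiv.associated_det⟩
  simpa only [hγ₁] using h₂.update_pred hcoeff

theorem IsColReduced.exists_unimodEquiv_const {d : ℕ} (h : T.IsColReduced γ)
    (hsum : ∑ j, γ j = n * d) : ∃ T', UnimodEquiv T T' ∧ T'.IsColReduced fun _ ↦ d := by
  suffices key : ∀ K (T : Matrix (Fin n) (Fin n) F[X]) (γ : Fin n → ℕ), T.IsColReduced γ →
      ∑ j, γ j = n * d → ∑ j, (γ j - d) = K → ∃ T', UnimodEquiv T T' ∧ T'.IsColReduced fun _ ↦ d
    from key _ T γ h hsum rfl
  intro K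
  induction K using Nat.strong_induction_on with
  | _ K ih =>
  intro T γ h hsum hK
  by_cases hγ : γ = fun _ ↦ d
  · subst hγ
    exact ⟨T, .refl T, h⟩
  obtain ⟨i, m, hi, hm⟩ := Fintype.exists_lt_lt_of_sum_eq (by rwa [Fintype.card_fin]) hγ
  have him : i ≠ m := by rintro rfl; omega
  obtain ⟨T', hTT', h'⟩ := h.exists_unimodEquiv_shift him (by omega)
  have hlt : ∑ j, (Function.update (Function.update γ i (γ i + 1)) m (γ m - 1) j - d) < K := by
    rw [← hK]
    refine Finset.sum_lt_sum (fun j _ ↦ ?_)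
      ⟨m, Finset.mem_univ m, by simp only [Function.update_self]; omega⟩
    simp only [Function.update_apply]
    split_ifs <;> subst_vars <;> omega
  obtain ⟨P, hT'P, hP⟩ := ih _ hlt T' _ h'
    ((Fintype.sum_update_update_eq γ him (by omega)).trans hsum) rfl
  exact ⟨P, hTT'.trans hT'P, hP⟩

theorem IsColReduced.matDegEq {d : ℕ} (h : T.IsColReduced fun _ ↦ d) (hn : 0 < n) :
    MatDegEq T d := by
  have hle : ∀ i j, (T i j).degree ≤ d := fun i j ↦ natDegree_le_iff_degree_le.1 (h.1 i j)
  obtain ⟨i, j, hij⟩ : ∃ i j, (T i j).coeff d ≠ 0 := by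
    by_contra! H
    have : Nonempty (Fin n) := ⟨⟨0, hn⟩⟩
    exact h.2 (by rw [show T.colLeadCoeff (fun _ ↦ d) = 0 from ext H, det_zero])
  exact ⟨hle, i, j, degree_eq_of_le_of_coeff_ne_zero (hle i j) hij⟩

end SquareMatrixPolynomial

end Matrix

theorem statement_3_general {F : Type*} [Field F] (n d : ℕ) (hn : 0 < n)
    (Q : Matrix (Fin n) (Fin n) F[X]) (hreg : Q.det ≠ 0)
    (hdet : (Q.det).natDegree = d * n) :
    ∃ P : Matrix (Fin n) (Fin n) F[X],
      MatDegEq P d ∧ IsUnit (leadMat P d).det ∧ UnimodEquiv P Q := by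
  obtain ⟨T, γ, hQT, hT⟩ := Matrix.exists_unimodEquiv_isColReduced hreg
  have hsum : ∑ j, γ j = n * d := by
    rw [← hT.natDegree_det, ← natDegree_eq_of_degree_eq
      (degree_eq_degree_of_associated hQT.associated_det), hdet, mul_comm]
  obtain ⟨P, hTP, hP⟩ := hT.exists_unimodEquiv_const hsum
  have hlead : leadMat P d = P.colLeadCoeff fun _ ↦ d := rfl
  exact ⟨P, hP.matDegEq hn, hlead ▸ isUnit_iff_ne_zero.2 hP.2, (hQT.trans hTP).symm⟩

theorem statement_3 {F : Type*} [Field F] (n d : ℕ) (hn : 0 < n) (hd : 0 < d)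
    (Q : Matrix (Fin n) (Fin n) F[X]) (hreg : Q.det ≠ 0)
    (hdet : (Q.det).natDegree = d * n) :
    ∃ P : Matrix (Fin n) (Fin n) F[X],
      MatDegEq P d ∧ IsUnit (leadMat P d).det ∧ UnimodEquiv P Q :=
  statement_3_general n d hn Q hreg hdet
end

section
/- Let v ∈ ℕ^r be a vector of natural numbers with component sum s, and write s = q·r + t with 0 ≤ t < r. Then for every vector w ∈ ℕ^r having exactly t components equal to q+1 and r − t components equal to q, there exists a finite sequence v = v_0, v_1, …, v_N = w of vectors in ℕ^r in which each consecutive pair (v_i, v_{i+1}) is an interchange step or a compression step, and at most r − 1 of the steps are compression steps. -/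
/-- `(x, w)` is an interchange step: `w` is obtained from `x` by swapping two
adjacent components. -/
def InterchangeStep {r : ℕ} (x w : Fin r → ℕ) : Prop :=
  ∃ (i : Fin r) (h : (i : ℕ) + 1 < r),
    w i = x ⟨(i : ℕ) + 1, h⟩ ∧ w ⟨(i : ℕ) + 1, h⟩ = x i ∧
    ∀ j : Fin r, j ≠ i → j ≠ ⟨(i : ℕ) + 1, h⟩ → w j = x j

/-- `(x, w)` is a compression step: `w` agrees with `x` except possibly in two adjacent
positions `i, i+1`, where the sum is preserved and both new values lie strictly between
the old minimum and maximum. -/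
def CompressionStep {r : ℕ} (x w : Fin r → ℕ) : Prop :=
  ∃ (i : Fin r) (h : (i : ℕ) + 1 < r),
    w i + w ⟨(i : ℕ) + 1, h⟩ = x i + x ⟨(i : ℕ) + 1, h⟩ ∧
    min (x i) (x ⟨(i : ℕ) + 1, h⟩) < w i ∧ w i < max (x i) (x ⟨(i : ℕ) + 1, h⟩) ∧
    min (x i) (x ⟨(i : ℕ) + 1, h⟩) < w ⟨(i : ℕ) + 1, h⟩ ∧
    w ⟨(i : ℕ) + 1, h⟩ < max (x i) (x ⟨(i : ℕ) + 1, h⟩) ∧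
    ∀ j : Fin r, j ≠ i → j ≠ ⟨(i : ℕ) + 1, h⟩ → w j = x j

open Classical

lemma not_comp_of_inter {r : ℕ} {x w : Fin r → ℕ} (hI : InterchangeStep x w) :
    ¬ CompressionStep x w := by
  obtain ⟨i, h, hi1, hi2, hother⟩ := hI
  rintro ⟨j, g, hsum, h1, h2, h3, h4, hother'⟩
  by_cases hji : j = i
  · subst hji
    rw [hi1] at h1 h2
    omega
  · by_cases hji1 : j = (⟨(i : ℕ) + 1, h⟩ : Fin r)
    · -- consider j+1
      have hvj : (j : ℕ) = (i : ℕ) + 1 := congrArg Fin.val hji1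
      have hne1 : (⟨(j : ℕ) + 1, g⟩ : Fin r) ≠ i :=
        Fin.ne_of_val_ne (by show (j : ℕ) + 1 ≠ (i : ℕ); omega)
      have hne2 : (⟨(j : ℕ) + 1, g⟩ : Fin r) ≠ (⟨(i : ℕ) + 1, h⟩ : Fin r) :=
        Fin.ne_of_val_ne (by show (j : ℕ) + 1 ≠ (i : ℕ) + 1; omega)
      have := hother _ hne1 hne2
      rw [this] at h3 h4
      omega
    · have := hother _ hji hji1
      rw [this] at h1 h2
      omega

lemma sum_eq_of_step {r : ℕ} {x w : Fin r → ℕ}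
    (h : InterchangeStep x w ∨ CompressionStep x w) : ∑ i, w i = ∑ i, x i := by
  have key : ∀ (i : Fin r) (h' : (i : ℕ) + 1 < r),
      w i + w ⟨(i : ℕ) + 1, h'⟩ = x i + x ⟨(i : ℕ) + 1, h'⟩ →
      (∀ j : Fin r, j ≠ i → j ≠ ⟨(i : ℕ) + 1, h'⟩ → w j = x j) →
      ∑ i, w i = ∑ i, x i := by
    intro i h' hsum hother
    have hne : i ≠ (⟨(i : ℕ) + 1, h'⟩ : Fin r) := by
      intro hc; have := congrArg Fin.val hc; simp at this
    have hsub : ({i, ⟨(i : ℕ) + 1, h'⟩} : Finset (Fin r)) ⊆ Finset.univ := by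
      simp
    rw [← Finset.sum_sdiff hsub, ← Finset.sum_sdiff hsub,
      Finset.sum_pair hne, Finset.sum_pair hne]
    have : ∑ j ∈ Finset.univ \ {i, ⟨(i : ℕ) + 1, h'⟩}, w j
        = ∑ j ∈ Finset.univ \ {i, ⟨(i : ℕ) + 1, h'⟩}, x j := by
      apply Finset.sum_congr rfl
      intro j hj
      simp [Finset.mem_sdiff] at hj
      exact hother j hj.1 hj.2
    omega
  rcases h with ⟨i, h', a, b, c⟩ | ⟨i, h', a, _, _, _, _, c⟩
  · exact key i h' (by omega) c
  · exact key i h' a c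

inductive R {r : ℕ} : ℕ → (Fin r → ℕ) → (Fin r → ℕ) → Prop
  | refl (c : ℕ) (x : Fin r → ℕ) : R c x x
  | inter {c : ℕ} {x y z : Fin r → ℕ} :
      InterchangeStep x y → R c y z → R c x z
  | comp {c : ℕ} {x y z : Fin r → ℕ} :
      CompressionStep x y → R c y z → R (c + 1) x z

lemma R.mono {r : ℕ} {a b : ℕ} {x y : Fin r → ℕ} (h : R a x y) (hab : a ≤ b) :
    R b x y := by
  induction h generalizing b with
  | refl c x => exact R.refl b x
  | inter hs _ ih => exact R.inter hs (ih hab)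
  | comp hs _ ih =>
    obtain ⟨b', rfl⟩ : ∃ b', b = b' + 1 := ⟨b - 1, by omega⟩
    exact R.comp hs (ih (by omega))

lemma R.trans {r : ℕ} {a b : ℕ} {x y z : Fin r → ℕ} (h1 : R a x y) (h2 : R b y z) :
    R (a + b) x z := by
  induction h1 with
  | refl c x => exact h2.mono (by omega)
  | inter hs _ ih => exact R.inter hs (ih h2)
  | comp hs _ ih => exact (R.comp hs (ih h2)).mono (by omega)

lemma R.sum_eq {r : ℕ} {a : ℕ} {x y : Fin r → ℕ} (h : R a x y) : ∑ i, x i = ∑ i, y i := by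
  induction h with
  | refl => rfl
  | inter hs _ ih => rw [← ih, sum_eq_of_step (Or.inl hs)]
  | comp hs _ ih => rw [← ih, sum_eq_of_step (Or.inr hs)]

lemma inter_swap {r : ℕ} (x : Fin r → ℕ) (k : ℕ) (h : k + 1 < r) :
    InterchangeStep x (x ∘ Equiv.swap ⟨k, by omega⟩ ⟨k + 1, h⟩) := by
  refine ⟨⟨k, by omega⟩, h, ?_, ?_, ?_⟩
  · simp [Equiv.swap_apply_left]
  · simp [Equiv.swap_apply_right]
  · intro j hj1 hj2
    simp [Equiv.swap_apply_of_ne_of_ne hj1 hj2]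

lemma moveFront {r : ℕ} : ∀ (k : ℕ) (hk : k < r) (x : Fin r → ℕ),
    ∃ σ : Equiv.Perm (Fin r), R 0 x (x ∘ σ) ∧ σ ⟨0, by omega⟩ = ⟨k, hk⟩ := by
  intro k
  induction k with
  | zero => intro hk x; exact ⟨Equiv.refl _, by simpa using R.refl 0 x, rfl⟩
  | succ k ih =>
    intro hk x
    set sw := Equiv.swap (⟨k, by omega⟩ : Fin r) ⟨k + 1, hk⟩ with hsw
    obtain ⟨σ', hR, hσ'⟩ := ih (by omega) (x ∘ sw)
    refine ⟨σ'.trans sw, ?_, ?_⟩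
    · have : (x ∘ sw) ∘ σ' = x ∘ (σ'.trans sw) := by
        ext a; simp
      rw [← this]
      exact R.inter (inter_swap x k hk) hR
    · simp [Equiv.trans_apply, hσ', hsw, Equiv.swap_apply_left]

lemma inter_cons {n : ℕ} {x y : Fin n → ℕ} (c : ℕ) (h : InterchangeStep x y) :
    InterchangeStep (Fin.cons c x) (Fin.cons c y) := by
  obtain ⟨i, hi, h1, h2, h3⟩ := h
  have hsucc : ((i.succ : Fin (n + 1)) : ℕ) + 1 < n + 1 := by simp; omega
  have key : (⟨((i.succ : Fin (n + 1)) : ℕ) + 1, hsucc⟩ : Fin (n + 1))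
      = (⟨(i : ℕ) + 1, hi⟩ : Fin n).succ := by
    apply Fin.ext; simp
  refine ⟨i.succ, hsucc, ?_, ?_, ?_⟩
  · rw [key, Fin.cons_succ, Fin.cons_succ]; exact h1
  · rw [key, Fin.cons_succ, Fin.cons_succ]; exact h2
  · intro j hj1 hj2
    rw [key] at hj2
    induction j using Fin.cases with
    | zero => simp
    | succ j' =>
      rw [Fin.cons_succ, Fin.cons_succ]
      exact h3 j' (fun hc => hj1 (by rw [hc])) (fun hc => hj2 (by rw [hc]))

lemma comp_cons {n : ℕ} {x y : Fin n → ℕ} (c : ℕ) (h : CompressionStep x y) :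
    CompressionStep (Fin.cons c x) (Fin.cons c y) := by
  obtain ⟨i, hi, h0, h1, h2, h3, h4, h5⟩ := h
  have hsucc : ((i.succ : Fin (n + 1)) : ℕ) + 1 < n + 1 := by simp; omega
  have key : (⟨((i.succ : Fin (n + 1)) : ℕ) + 1, hsucc⟩ : Fin (n + 1))
      = (⟨(i : ℕ) + 1, hi⟩ : Fin n).succ := by
    apply Fin.ext; simp
  refine ⟨i.succ, hsucc, ?_, ?_, ?_, ?_, ?_, ?_⟩
  · rw [key]; simp only [Fin.cons_succ]; exact h0
  · rw [key]; simp only [Fin.cons_succ]; exact h1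
  · rw [key]; simp only [Fin.cons_succ]; exact h2
  · rw [key]; simp only [Fin.cons_succ]; exact h3
  · rw [key]; simp only [Fin.cons_succ]; exact h4
  · intro j hj1 hj2
    rw [key] at hj2
    induction j using Fin.cases with
    | zero => simp
    | succ j' =>
      rw [Fin.cons_succ, Fin.cons_succ]
      exact h5 j' (fun hc => hj1 (by rw [hc])) (fun hc => hj2 (by rw [hc]))

lemma R.cons {n : ℕ} {a : ℕ} {x y : Fin n → ℕ} (c : ℕ) (h : R a x y) :
    R a (Fin.cons c x) (Fin.cons c y) := by
  induction h with
  | refl a x => exact R.refl a _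
  | inter hs _ ih => exact R.inter (inter_cons c hs) ih
  | comp hs _ ih => exact R.comp (comp_cons c hs) ih

lemma shift_subset (P : ℕ → Prop) (N : ℕ) :
    (Finset.range (N + 1)).filter P ⊆
      insert 0 (((Finset.range N).filter fun j => P (j + 1)).image (· + 1)) := by
  intro i hi
  simp only [Finset.mem_filter, Finset.mem_range] at hi
  rcases Nat.eq_zero_or_pos i with rfl | hpos
  · simp
  · obtain ⟨j, rfl⟩ : ∃ j, i = j + 1 := ⟨i - 1, by omega⟩
    apply Finset.mem_insert_of_mem
    simp only [Finset.mem_image, Finset.mem_filter, Finset.mem_range]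
    exact ⟨j, ⟨by omega, hi.2⟩, rfl⟩

lemma card_shift {P : ℕ → Prop} {N : ℕ} :
    ((Finset.range (N + 1)).filter P).card ≤
      ((Finset.range N).filter fun j => P (j + 1)).card + 1 := by
  calc ((Finset.range (N + 1)).filter P).card
      ≤ (insert 0 (((Finset.range N).filter fun j => P (j + 1)).image (· + 1))).card :=
        Finset.card_le_card (shift_subset P N)
    _ ≤ (((Finset.range N).filter fun j => P (j + 1)).image (· + 1)).card + 1 :=
        Finset.card_insert_le _ _
    _ ≤ ((Finset.range N).filter fun j => P (j + 1)).card + 1 :=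
        Nat.add_le_add_right Finset.card_image_le 1

lemma card_shift' {P : ℕ → Prop} {N : ℕ} (h0 : ¬ P 0) :
    ((Finset.range (N + 1)).filter P).card ≤
      ((Finset.range N).filter fun j => P (j + 1)).card := by
  have hsub : (Finset.range (N + 1)).filter P ⊆
      ((Finset.range N).filter fun j => P (j + 1)).image (· + 1) := by
    intro i hi
    have := shift_subset P N hi
    rcases Finset.mem_insert.1 this with rfl | hm
    · exact absurd (Finset.mem_filter.1 hi).2 h0
    · exact hm
  calc ((Finset.range (N + 1)).filter P).card
      ≤ _ := Finset.card_le_card hsub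
    _ ≤ _ := Finset.card_image_le

lemma R.toSeq {r : ℕ} {c : ℕ} {x y : Fin r → ℕ} (h : R c x y) :
    ∃ (N : ℕ) (vs : ℕ → Fin r → ℕ),
      vs 0 = x ∧ vs N = y ∧
      (∀ i < N, InterchangeStep (vs i) (vs (i + 1)) ∨ CompressionStep (vs i) (vs (i + 1))) ∧
      ((Finset.range N).filter fun i => CompressionStep (vs i) (vs (i + 1))).card ≤ c := by
  induction h with
  | refl c x => exact ⟨0, fun _ => x, rfl, rfl, by omega, by simp⟩
  | @inter c x y z hs _ ih =>
    obtain ⟨N, vs, h0, hN, hsteps, hcard⟩ := ih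
    refine ⟨N + 1, fun i => match i with | 0 => x | (j + 1) => vs j, rfl, hN, ?_, ?_⟩
    · intro i hi
      match i with
      | 0 => left; show InterchangeStep x (vs 0); rw [h0]; exact hs
      | (j + 1) => exact hsteps j (by omega)
    · refine le_trans (card_shift' ?_) ?_
      · show ¬ CompressionStep x (vs 0)
        rw [h0]; exact not_comp_of_inter hs
      · exact hcard
  | @comp c x y z hs _ ih =>
    obtain ⟨N, vs, h0, hN, hsteps, hcard⟩ := ih
    refine ⟨N + 1, fun i => match i with | 0 => x | (j + 1) => vs j, rfl, hN, ?_, ?_⟩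
    · intro i hi
      match i with
      | 0 => right; show CompressionStep x (vs 0); rw [h0]; exact hs
      | (j + 1) => exact hsteps j (by omega)
    · refine le_trans card_shift ?_
      have he : ((Finset.range N).filter fun j =>
          CompressionStep
            ((fun i => match (motive := ℕ → Fin r → ℕ) i with | 0 => x | (j + 1) => vs j) (j + 1))
            ((fun i => match (motive := ℕ → Fin r → ℕ) i with | 0 => x | (j + 1) => vs j) (j + 1 + 1)))
          = ((Finset.range N).filter fun j => CompressionStep (vs j) (vs (j + 1))) := rfl
      rw [he]
      omega

lemma key (r : ℕ) : ∀ (v w : Fin r → ℕ), (∑ i, v i) = (∑ i, w i) →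
    (∀ i j, w i ≤ w j + 1) → R (r - 1) v w := by
  induction r with
  | zero =>
    intro v w _ _
    have : v = w := funext fun i => i.elim0
    rw [this]; exact R.refl 0 w
  | succ n ih =>
    cases n with
    | zero =>
      intro v w hsum _
      rw [Fin.sum_univ_one, Fin.sum_univ_one] at hsum
      have : v = w := funext fun i => by
        have hi : i = 0 := Fin.ext (by have := i.isLt; simp only [Fin.val_zero]; omega)
        rw [hi]; exact hsum
      rw [this]; exact R.refl 0 w
    | succ m =>
      intro v w hsum hbal
      set c := w 0 with hc
      -- Step A: reach some v2 with v2 0 = c using at most 1 compression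
      have stepA : ∃ v2 : Fin (m + 2) → ℕ, R 1 v v2 ∧ v2 0 = c := by
        by_cases hex : ∃ j, v j = c
        · obtain ⟨j, hj⟩ := hex
          obtain ⟨σ, hR, hσ⟩ := moveFront (r := m + 2) j.val j.isLt v
          refine ⟨v ∘ σ, hR.mono (by omega), ?_⟩
          show v (σ 0) = c
          have h0 : σ 0 = j := by
            have : (⟨0, by omega⟩ : Fin (m + 2)) = 0 := rfl
            rw [← this, hσ, Fin.eta]
          rw [h0, hj]
        · push_neg at hex
          have hbig : ∃ j, c < v j := by
            by_contra hb
            push_neg at hb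
            have h0 : ∀ j, v j + 1 ≤ c := fun j => by have := hb j; have := hex j; omega
            have hc1 : 1 ≤ c := by have := h0 0; omega
            have hv_le : ∑ i, v i ≤ ∑ _i : Fin (m + 2), (c - 1) :=
              Finset.sum_le_sum fun i _ => by have := h0 i; omega
            have hw_gt : ∑ _i : Fin (m + 2), (c - 1) < ∑ i, w i := by
              apply Finset.sum_lt_sum (fun i _ => by have := hbal 0 i; omega)
              exact ⟨0, Finset.mem_univ _, by omega⟩
            omega
          have hsmall : ∃ i, v i < c := by
            by_contra hb
            push_neg at hb
            have h0 : ∀ j, c + 1 ≤ v j := fun j => by have := hb j; have := hex j; omega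
            have hv_ge : ∑ _i : Fin (m + 2), (c + 1) ≤ ∑ i, v i :=
              Finset.sum_le_sum fun i _ => h0 i
            have hw_lt : ∑ i, w i < ∑ _i : Fin (m + 2), (c + 1) := by
              apply Finset.sum_lt_sum (fun i _ => by have := hbal i 0; omega)
              exact ⟨0, Finset.mem_univ _, by omega⟩
            omega
          obtain ⟨jb, hjb⟩ := hbig
          obtain ⟨js, hjs⟩ := hsmall
          obtain ⟨σ, hR1, hσ⟩ := moveFront (r := m + 2) jb.val jb.isLt v
          set x1 := v ∘ σ with hx1
          have hσ0 : σ 0 = jb := by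
            have : (⟨0, by omega⟩ : Fin (m + 2)) = 0 := rfl
            rw [← this, hσ, Fin.eta]
          have hx10 : c < x1 0 := by
            show c < v (σ 0); rw [hσ0]; exact hjb
          have hm0ne : σ.symm js ≠ 0 := by
            intro hcon
            have : js = σ 0 := by rw [← hcon, Equiv.apply_symm_apply]
            rw [this, hσ0] at hjs; omega
          obtain ⟨m0', hm0'⟩ := Fin.eq_succ_of_ne_zero hm0ne
          have htail_small : Fin.tail x1 m0' < c := by
            show x1 m0'.succ < c
            rw [← hm0']
            show v (σ (σ.symm js)) < c
            rw [Equiv.apply_symm_apply]; exact hjs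
          obtain ⟨τ, hR2, hτ⟩ := moveFront (r := m + 1) m0'.val m0'.isLt (Fin.tail x1)
          set x2 : Fin (m + 2) → ℕ := Fin.cons (x1 0) (Fin.tail x1 ∘ τ) with hx2
          have hR2' : R 0 x1 x2 := by
            have := R.cons (x1 0) hR2
            rwa [Fin.cons_self_tail] at this
          have hx20 : x2 0 = x1 0 := Fin.cons_zero _ _
          have hx21 : x2 1 < c := by
            have h1 : (1 : Fin (m + 2)) = (0 : Fin (m + 1)).succ := rfl
            rw [hx2, h1, Fin.cons_succ]
            show Fin.tail x1 (τ 0) < c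
            have hτ0 : τ 0 = m0' := by
              have : (⟨0, by omega⟩ : Fin (m + 1)) = 0 := rfl
              rw [← this, hτ, Fin.eta]
            rw [hτ0]; exact htail_small
          obtain ⟨a, ha⟩ : ∃ a, x2 1 = a := ⟨_, rfl⟩
          obtain ⟨b, hb⟩ : ∃ b, x2 0 = b := ⟨_, rfl⟩
          have hac : a < c := by rw [← ha]; exact hx21
          have hcb : c < b := by rw [← hb, hx20]; exact hx10
          have hone : (1 : Fin (m + 2)) ≠ 0 := Fin.ne_of_val_ne (by simp)
          set wnew : Fin (m + 2) → ℕ :=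
            fun k => if k = 0 then c else if k = 1 then a + b - c else x2 k with hwnew
          have hw0 : wnew 0 = c := if_pos rfl
          have hw1 : wnew 1 = a + b - c := by
            show (if (1 : Fin (m + 2)) = 0 then c
              else if (1 : Fin (m + 2)) = 1 then a + b - c else x2 1) = a + b - c
            rw [if_neg hone, if_pos rfl]
          have hcomp : CompressionStep x2 wnew := by
            refine ⟨0, by simp only [Fin.val_zero]; omega, ?_⟩
            have hidx : (⟨((0 : Fin (m + 2)) : ℕ) + 1,
                by simp only [Fin.val_zero]; omega⟩ : Fin (m + 2)) = 1 :=
              Fin.ext (by simp)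
            rw [hidx, hw0, hw1, ha, hb]
            refine ⟨by omega, by omega, by omega, by omega, by omega, ?_⟩
            intro j hj0 hj1
            show (if j = 0 then c else if j = 1 then a + b - c else x2 j) = x2 j
            rw [if_neg hj0, if_neg hj1]
          have hR3 : R 1 x2 wnew := R.comp hcomp (R.refl 0 wnew)
          refine ⟨wnew, ?_, hw0⟩
          have := (hR1.trans hR2').trans hR3
          exact this.mono (by omega)
      obtain ⟨v2, hv2R, hv2head⟩ := stepA
      -- Step B: induction on the tail
      have hsum2 : ∑ i, v2 i = ∑ i, w i := by rw [← hv2R.sum_eq]; exact hsum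
      have hsumt : ∑ i, Fin.tail v2 i = ∑ i, Fin.tail w i := by
        rw [Fin.sum_univ_succ v2, Fin.sum_univ_succ w, hv2head, ← hc] at hsum2
        exact Nat.add_left_cancel hsum2
      have hbalt : ∀ i j, Fin.tail w i ≤ Fin.tail w j + 1 := fun i j => hbal i.succ j.succ
      have htailR : R (m + 1 - 1) (Fin.tail v2) (Fin.tail w) := ih _ _ hsumt hbalt
      have hliftR : R m v2 w := by
        have := R.cons c (htailR.mono (by omega : m + 1 - 1 ≤ m))
        rw [← hv2head, Fin.cons_self_tail, hv2head, hc, Fin.cons_self_tail] at this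
        exact this
      exact (hv2R.trans hliftR).mono (by omega)

open Classical in
theorem statement_8 {r : ℕ} (hr : 0 < r) (v : Fin r → ℕ) (s q t : ℕ)
    (hs : s = ∑ i, v i) (hqt : s = q * r + t) (ht : t < r)
    (w : Fin r → ℕ)
    (hw1 : (Finset.univ.filter fun i => w i = q + 1).card = t)
    (hw2 : (Finset.univ.filter fun i => w i = q).card = r - t) :
    ∃ (N : ℕ) (vs : ℕ → Fin r → ℕ),
      vs 0 = v ∧ vs N = w ∧
      (∀ i < N, InterchangeStep (vs i) (vs (i + 1)) ∨ CompressionStep (vs i) (vs (i + 1))) ∧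
      ((Finset.range N).filter fun i => CompressionStep (vs i) (vs (i + 1))).card ≤ r - 1 := by
  classical
  set A := (Finset.univ.filter fun i => w i = q + 1) with hA
  set B := (Finset.univ.filter fun i => w i = q) with hB
  have hdisj : Disjoint A B := by
    rw [Finset.disjoint_filter]
    intro i _ h1 h2
    omega
  have hcardU : (A ∪ B).card = r := by
    rw [Finset.card_union_of_disjoint hdisj, hw1, hw2]
    omega
  have hUniv : A ∪ B = Finset.univ := by
    apply Finset.eq_univ_of_card
    rw [hcardU, Fintype.card_fin]
  have hmem : ∀ i, w i = q + 1 ∨ w i = q := by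
    intro i
    have : i ∈ A ∪ B := hUniv ▸ Finset.mem_univ i
    rcases Finset.mem_union.1 this with h | h
    · left; exact (Finset.mem_filter.1 h).2
    · right; exact (Finset.mem_filter.1 h).2
  have hsumw : ∑ i, w i = q * r + t := by
    have h1 : ∑ i ∈ A, w i = t * (q + 1) := by
      rw [Finset.sum_congr rfl (fun i hi => (Finset.mem_filter.1 hi).2),
        Finset.sum_const, hw1, smul_eq_mul]
    have h2 : ∑ i ∈ B, w i = (r - t) * q := by
      rw [Finset.sum_congr rfl (fun i hi => (Finset.mem_filter.1 hi).2),
        Finset.sum_const, hw2, smul_eq_mul]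
    have := Finset.sum_union hdisj (f := w)
    rw [hUniv] at this
    rw [this, h1, h2]
    have hrt : r - t + t = r := by omega
    calc t * (q + 1) + (r - t) * q = (t + (r - t)) * q + t := by ring
      _ = q * r + t := by rw [show t + (r - t) = r by omega]; ring
  have hbal : ∀ i j, w i ≤ w j + 1 := by
    intro i j
    rcases hmem i with h | h <;> rcases hmem j with h' | h' <;> omega
  have hsum : ∑ i, v i = ∑ i, w i := by rw [hsumw, ← hqt, hs]
  exact (key r v w hsum hbal).toSeq
end

section
/- Let F be a field, k ≥ 1 and n ≥ 1 natural numbers, and M a finite multiset of irreducible polynomials in F[λ], each of degree at most k. Then there exist multisets M_1, …, M_n of polynomials whose multiset-sum (disjoint union) is M such that, setting p_i equal to the product of the elements of M_i (so each p_i is nonzero): the degree vector (deg p_1, …, deg p_n) is k-homogeneous, and for each j with 1 ≤ j ≤ k, the vector whose i-th entry is the number of elements of M_i of degree j is 1-homogeneous. -/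
/-!
Sort `M` by degree and deal it out round-robin: the `t`-th polynomial goes to part `t % n`.
The polynomials of a given degree occupy an interval of positions, and any two residue classes
mod `n` meet an interval in numbers of points differing by at most one. Part `i` receives the
degrees `a i, a (i + n), a (i + 2n), …` of the sorted degree sequence `a`; for `i < j` these
interleave with the degrees received by part `j`, so the two sums differ by at most one term,
which is at most `k`.
-/

open Polynomial Finset

section ResidueClasses

variable {n : ℕ}

theorem lt_div_iff_add_mul_lt {i m q : ℕ} (hi : i < n) :
    q < (m + n - 1 - i) / n ↔ i + q * n < m := by
  rw [← Nat.add_one_le_iff, Nat.le_div_iff_mul_le (by omega), add_one_mul]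
  omega

theorem filter_range_mod_eq_image {i : ℕ} (hi : i < n) (m : ℕ) :
    {t ∈ range m | t % n = i} = (range ((m + n - 1 - i) / n)).image (fun q => i + q * n) := by
  ext t
  simp only [mem_filter, mem_range, mem_image, lt_div_iff_add_mul_lt hi]
  constructor
  · rintro ⟨htm, rfl⟩
    exact ⟨t / n, by rwa [Nat.mod_add_div'], Nat.mod_add_div' t n⟩
  · rintro ⟨q, hq, rfl⟩
    exact ⟨hq, by rw [Nat.add_mul_mod_self_right, Nat.mod_eq_of_lt hi]⟩

theorem sum_filter_range_mod {M : Type*} [AddCommMonoid M] {i : ℕ} (hi : i < n) (m : ℕ)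
    (g : ℕ → M) :
    ∑ t ∈ range m with t % n = i, g t =
      ∑ q ∈ range ((m + n - 1 - i) / n), g (i + q * n) := by
  rw [filter_range_mod_eq_image hi, sum_image]
  intro a _ b _ hab
  have hab : a * n = b * n := by simp only at hab; omega
  exact Nat.eq_of_mul_eq_mul_right (by omega) hab

theorem card_filter_range_mod {i : ℕ} (hi : i < n) (m : ℕ) :
    #{t ∈ range m | t % n = i} = (m + n - 1 - i) / n := by
  rw [card_eq_sum_ones, sum_filter_range_mod hi, sum_const, card_range, smul_eq_mul, mul_one]

theorem card_filter_range_mod_le_of_le {i j : ℕ} (hij : i ≤ j) (hj : j < n) (m : ℕ) :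
    #{t ∈ range m | t % n = j} ≤ #{t ∈ range m | t % n = i} ∧
      #{t ∈ range m | t % n = i} ≤ #{t ∈ range m | t % n = j} + 1 := by
  rw [card_filter_range_mod (hij.trans_lt hj), card_filter_range_mod hj,
    ← Nat.add_div_right _ (by omega)]
  exact ⟨Nat.div_le_div_right (by omega), Nat.div_le_div_right (by omega)⟩

theorem card_filter_Ico_mod_le {i j : ℕ} (hi : i < n) (hj : j < n) (s e : ℕ) :
    #{t ∈ Ico s e | t % n = i} ≤ #{t ∈ Ico s e | t % n = j} + 1 := by
  rcases lt_or_ge e s with hes | hse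
  · simp [Ico_eq_empty_of_le hes.le]
  have hcard (r : ℕ) : #{t ∈ range e | t % n = r} =
      #{t ∈ range s | t % n = r} + #{t ∈ Ico s e | t % n = r} := by
    rw [range_eq_Ico, range_eq_Ico,
      ← card_union_of_disjoint (disjoint_filter_filter (Ico_disjoint_Ico_consecutive 0 s e)),
      ← filter_union, Ico_union_Ico_eq_Ico (Nat.zero_le s) hse]
  have := hcard i
  have := hcard j
  rcases le_total i j with hij | hji
  · have := card_filter_range_mod_le_of_le hij hj s
    have := card_filter_range_mod_le_of_le hij hj e
    omega
  · have := card_filter_range_mod_le_of_le hji hi s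
    have := card_filter_range_mod_le_of_le hji hi e
    omega

theorem sum_map_filter_mod {α : Type*} (hn : 0 < n) (s : Finset ℕ) (f : ℕ → α) :
    ∑ i : Fin n, {t ∈ s | t % n = i}.val.map f = s.val.map f := by
  have hsingle (u : Finset ℕ) : u.val.map f = ∑ t ∈ u, {f t} := by
    simpa [Multiset.map_map] using (Multiset.sum_map_singleton (u.val.map f)).symm
  simp only [hsingle]
  rw [Fin.sum_univ_eq_sum_range (fun i => ∑ t ∈ s with t % n = i, {f t}),
    sum_fiberwise_of_maps_to (fun t _ => mem_range.2 (Nat.mod_lt t hn))]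

end ResidueClasses

section Monotone

variable {n : ℕ} {a : ℕ → ℕ}

theorem exists_filter_range_eq_range {P : ℕ → Prop} [DecidablePred P] (hP : Antitone P)
    (m : ℕ) : ∃ e, {t ∈ range m | P t} = range e := by
  induction m with
  | zero => exact ⟨0, rfl⟩
  | succ m ih =>
    by_cases hm : P m
    · refine ⟨m + 1, filter_true_of_mem fun t ht => hP (mem_range_succ_iff.1 ht) hm⟩
    · obtain ⟨e, he⟩ := ih
      exact ⟨e, by rw [range_add_one, filter_insert, if_neg hm, he]⟩

theorem Monotone.exists_filter_range_eq_Ico (ha : Monotone a) (m v : ℕ) :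
    ∃ s e, {t ∈ range m | a t = v} = Ico s e := by
  obtain ⟨s, hs⟩ := exists_filter_range_eq_range (P := (a · < v))
    (fun _ _ h h' => (ha h).trans_lt h') m
  obtain ⟨e, he⟩ := exists_filter_range_eq_range (P := (a · ≤ v))
    (fun _ _ h h' => (ha h).trans h') m
  refine ⟨s, e, ext fun t => ?_⟩
  have hst := Finset.ext_iff.1 hs t
  have het := Finset.ext_iff.1 he t
  simp only [mem_filter, mem_range, mem_Ico] at hst het ⊢
  constructor
  · rintro ⟨htm, rfl⟩
    exact ⟨not_lt.1 fun h => (hst.2 h).2.false, het.1 ⟨htm, le_rfl⟩⟩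
  · rintro ⟨hst', hte⟩
    obtain ⟨htm, hle⟩ := het.2 hte
    exact ⟨htm, le_antisymm hle (not_lt.1 fun h => (hst.1 ⟨htm, h⟩).not_ge hst')⟩

theorem Monotone.card_filter_mod_le (ha : Monotone a) {i j : ℕ} (hi : i < n) (hj : j < n)
    (m v : ℕ) :
    #{t ∈ {t ∈ range m | t % n = i} | a t = v} ≤
      #{t ∈ {t ∈ range m | t % n = j} | a t = v} + 1 := by
  obtain ⟨s, e, hse⟩ := ha.exists_filter_range_eq_Ico m v
  rw [filter_comm, filter_comm (· % n = j), hse]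
  exact card_filter_Ico_mod_le hi hj s e

theorem Monotone.sum_filter_mod_le (ha : Monotone a) {k : ℕ} (hk : ∀ t, a t ≤ k) {i j : ℕ}
    (hi : i < n) (hj : j < n) (m : ℕ) :
    ∑ t ∈ range m with t % n = i, a t ≤ ∑ t ∈ range m with t % n = j, a t + k := by
  rw [sum_filter_range_mod hi, sum_filter_range_mod hj]
  set ci := (m + n - 1 - i) / n
  set cj := (m + n - 1 - j) / n
  rcases le_or_gt i j with hij | hji
  · have hc : ci ≤ cj + 1 := by
      simpa only [card_filter_range_mod hi, card_filter_range_mod hj] using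
        (card_filter_range_mod_le_of_le hij hj m).2
    calc ∑ q ∈ range ci, a (i + q * n)
        ≤ ∑ q ∈ range (cj + 1), a (i + q * n) :=
          sum_le_sum_of_subset (range_subset_range.2 hc)
      _ = ∑ q ∈ range cj, a (i + q * n) + a (i + cj * n) := sum_range_succ _ _
      _ ≤ ∑ q ∈ range cj, a (j + q * n) + k :=
        add_le_add (sum_le_sum fun q _ => ha (by omega)) (hk _)
  · have hc : ci ≤ cj := by
      simpa only [card_filter_range_mod hi, card_filter_range_mod hj] using
        (card_filter_range_mod_le_of_le hji.le hi m).1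
    calc ∑ q ∈ range ci, a (i + q * n)
        ≤ ∑ q ∈ range ci, a (j + (q + 1) * n) :=
          sum_le_sum fun q _ => ha (by rw [add_one_mul]; omega)
      _ ≤ ∑ q ∈ range (ci + 1), a (j + q * n) := by
          rw [sum_range_succ' (fun q => a (j + q * n))]
          exact Nat.le_add_right _ _
      _ = ∑ q ∈ range ci, a (j + q * n) + a (j + ci * n) := sum_range_succ _ _
      _ ≤ ∑ q ∈ range cj, a (j + q * n) + k :=
        add_le_add (sum_le_sum_of_subset (range_subset_range.2 hc)) (hk _)

end Monotone

theorem Multiset.exists_monotone_enumeration {α : Type*} (M : Multiset α) (d : α → ℕ)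
    (x₀ : α) (hM : ∀ x ∈ M, d x ≤ d x₀) :
    ∃ f : ℕ → α, (Finset.range (card M)).val.map f = M ∧ Monotone (d ∘ f) ∧
      ∀ t, d (f t) ≤ d x₀ := by
  set L := M.toList.mergeSort (fun x y => decide (d x ≤ d y))
  have hLM : (L : Multiset α) = M := by
    rw [← M.coe_toList]
    exact Multiset.coe_eq_coe.2 (List.mergeSort_perm _ _)
  have hsorted : L.Pairwise (fun x y => d x ≤ d y) := by
    simpa using List.pairwise_mergeSort (le := fun x y => decide (d x ≤ d y))
      (fun _ _ _ h h' => by simp only [decide_eq_true_eq] at *; omega)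
      (fun x y => by simpa using Nat.le_total _ _) M.toList
  have hbound (t : ℕ) : d (L.getD t x₀) ≤ d x₀ := by
    rcases lt_or_ge t L.length with ht | ht
    · rw [List.getD_eq_getElem _ _ ht]
      exact hM _ (hLM ▸ Multiset.mem_coe.2 (List.getElem_mem ht))
    · rw [List.getD_eq_default _ _ ht]
  -- padding the sorted list with `x₀` keeps `d ∘ f` monotone on all of `ℕ`
  refine ⟨(L.getD · x₀), ?_, fun t t' htt' => ?_, hbound⟩
  · rw [← hLM, Multiset.coe_card, range_val, ← Multiset.coe_range, Multiset.map_coe]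
    congr 1
    apply List.ext_getElem <;> simp +contextual
  · rcases lt_or_ge t' L.length with ht' | ht'
    · rcases htt'.lt_or_eq with h | rfl
      · simp only [Function.comp, List.getD_eq_getElem _ _ ht',
          List.getD_eq_getElem _ _ (h.trans ht')]
        exact List.pairwise_iff_getElem.1 hsorted _ _ _ _ h
      · exact le_rfl
    · simp only [Function.comp, List.getD_eq_default _ _ ht']
      exact hbound t

theorem abs_natCast_sub_le {x y c : ℕ} (hxy : x ≤ y + c) (hyx : y ≤ x + c) :
    |(x : ℤ) - y| ≤ c :=
  abs_sub_le_iff.2 ⟨by omega, by omega⟩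

theorem statement_9_general {F : Type*} [Field F] (k n : ℕ) (hn : 1 ≤ n)
    (M : Multiset F[X]) (hM : ∀ p ∈ M, Irreducible p ∧ p.natDegree ≤ k) :
    ∃ Ms : Fin n → Multiset F[X],
      -- the multiset-sum of the parts is M
      (∑ i, Ms i) = M ∧
      -- each product is nonzero
      (∀ i, (Ms i).prod ≠ 0) ∧
      -- the degree vector is k-homogeneous
      (∀ i j : Fin n,
        |(((Ms i).prod.natDegree : ℤ) - ((Ms j).prod.natDegree : ℤ))| ≤ (k : ℤ)) ∧
      -- for each degree 1 ≤ jd ≤ k the vector counting elements of degree jd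
      -- is 1-homogeneous
      (∀ jd : ℕ, 1 ≤ jd → jd ≤ k → ∀ i j : Fin n,
        |((Multiset.countP (fun p => p.natDegree = jd) (Ms i) : ℤ)
          - (Multiset.countP (fun p => p.natDegree = jd) (Ms j) : ℤ))| ≤ 1) := by
  obtain ⟨f, hfM, hmono, hbound⟩ := M.exists_monotone_enumeration natDegree (X ^ k)
    (fun p hp => (natDegree_X_pow (R := F) k).symm ▸ (hM p hp).2)
  simp only [natDegree_X_pow] at hbound
  set A : Fin n → Finset ℕ := fun i => {t ∈ range (Multiset.card M) | t % n = i}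
  have hA0 (i : Fin n) : (0 : F[X]) ∉ (A i).val.map f := fun h0 => by
    obtain ⟨t, ht, hft⟩ := Multiset.mem_map.1 h0
    have : f t ∈ M := hfM ▸ Multiset.mem_map_of_mem f (mem_filter.1 (show t ∈ A i from ht)).1
    exact (hM _ this).1.ne_zero hft
  refine ⟨fun i => (A i).val.map f, (sum_map_filter_mod hn _ f).trans hfM,
    fun i => Multiset.prod_ne_zero (hA0 i), fun i j => ?_, fun jd _ _ i j => ?_⟩
  · simp only [natDegree_multiset_prod _ (hA0 _), Multiset.map_map]
    exact abs_natCast_sub_le (hmono.sum_filter_mod_le hbound i.2 j.2 _)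
      (hmono.sum_filter_mod_le hbound j.2 i.2 _)
  · simp only [Multiset.countP_map]
    exact abs_natCast_sub_le (hmono.card_filter_mod_le i.2 j.2 _ jd)
      (hmono.card_filter_mod_le j.2 i.2 _ jd)

theorem statement_9 {F : Type*} [Field F] (k n : ℕ) (hk : 1 ≤ k) (hn : 1 ≤ n)
    (M : Multiset F[X]) (hM : ∀ p ∈ M, Irreducible p ∧ p.natDegree ≤ k) :
    ∃ Ms : Fin n → Multiset F[X],
      -- the multiset-sum of the parts is M
      (∑ i, Ms i) = M ∧
      -- each product is nonzero
      (∀ i, (Ms i).prod ≠ 0) ∧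
      -- the degree vector is k-homogeneous
      (∀ i j : Fin n,
        |(((Ms i).prod.natDegree : ℤ) - ((Ms j).prod.natDegree : ℤ))| ≤ (k : ℤ)) ∧
      -- for each degree 1 ≤ jd ≤ k the vector counting elements of degree jd
      -- is 1-homogeneous
      (∀ jd : ℕ, 1 ≤ jd → jd ≤ k → ∀ i j : Fin n,
        |((Multiset.countP (fun p => p.natDegree = jd) (Ms i) : ℤ)
          - (Multiset.countP (fun p => p.natDegree = jd) (Ms j) : ℤ))| ≤ 1) :=
  statement_9_general k n hn M hM
end

section
/- Let j ∈ ℤ and k ≥ 1 be integers, and let L be a nonempty finite multiset of integers, each lying in the closed interval [j, j+k], such that the sum of the elements of L equals μ·|L| for some integer μ. Then there exist nonempty multisets S_1, …, S_ℓ of integers whose multiset-sum (disjoint union) is L, such that each S_i has at most k elements and the sum of the elements of S_i equals μ·|S_i|. -/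
lemma order_lemma (p q : ℤ) (hp : 1 ≤ p) (hq : 0 ≤ q) :
    ∀ (n : ℕ) (M : Multiset ℤ), Multiset.card M = n → (∀ x ∈ M, -p ≤ x ∧ x ≤ q) →
    ∀ s : ℤ, 1 - p ≤ s → s ≤ q → M.sum = -s →
    ∃ l : List ℤ, (l : Multiset ℤ) = M ∧
      ∀ t, 1 - p ≤ s + (l.take t).sum ∧ s + (l.take t).sum ≤ q := by
  intro n
  induction n with
  | zero =>
    intro M hcard hb s hs1 hs2 hsum
    refine ⟨[], by simp [(Multiset.card_eq_zero.mp hcard)], ?_⟩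
    intro t; simp [hs1, hs2]
  | succ n ih =>
    intro M hcard hb s hs1 hs2 hsum
    have key : ∃ a ∈ M, 1 - p ≤ s + a ∧ s + a ≤ q := by
      by_cases hs : 1 ≤ s
      · -- find a ≤ 0
        have : ∃ a ∈ M, a ≤ 0 := by
          by_contra h
          push_neg at h
          have h1 : ∀ a ∈ M, (1:ℤ) ≤ a := fun a ha => h a ha
          have := Multiset.card_nsmul_le_sum h1
          rw [hcard, hsum] at this
          simp at this
          omega
        obtain ⟨a, haM, ha⟩ := this
        have hap := (hb a haM).1
        exact ⟨a, haM, by omega, by omega⟩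
      · push_neg at hs
        have : ∃ a ∈ M, 0 ≤ a := by
          by_contra h
          push_neg at h
          have h1 : ∀ a ∈ M, a ≤ (-1:ℤ) := fun a ha => by have := h a ha; omega
          have := Multiset.sum_le_card_nsmul M _ h1
          rw [hcard, hsum] at this
          simp at this
          omega
        obtain ⟨a, haM, ha⟩ := this
        have haq := (hb a haM).2
        exact ⟨a, haM, by omega, by omega⟩
    obtain ⟨a, haM, hb1, hb2⟩ := key
    have hcard' : Multiset.card (M.erase a) = n := by
      rw [Multiset.card_erase_of_mem haM, hcard]; rfl
    have hsum' : (M.erase a).sum = -(s + a) := by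
      have := Multiset.cons_erase haM
      have h2 : M.sum = a + (M.erase a).sum := by
        conv_lhs => rw [← this]
        simp
      omega
    obtain ⟨l, hl, hpre⟩ := ih (M.erase a) hcard'
      (fun x hx => hb x (Multiset.mem_of_mem_erase hx)) (s + a) hb1 hb2 hsum'
    refine ⟨a :: l, ?_, ?_⟩
    · rw [← Multiset.cons_erase haM, ← hl]; rfl
    · intro t
      cases t with
      | zero => simp only [List.take_zero, List.sum_nil, add_zero]; exact ⟨hs1, hs2⟩
      | succ t =>
        have := hpre t
        simp only [List.take_succ_cons, List.sum_cons]
        constructor <;> [omega; omega]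

lemma key_zero (k : ℕ) (hk : 1 ≤ k) (p q : ℤ) (hp : 0 ≤ p) (hq : 0 ≤ q) (hpq : p + q = k)
    (M : Multiset ℤ) (hM : M ≠ 0) (hb : ∀ x ∈ M, -p ≤ x ∧ x ≤ q) (hs : M.sum = 0) :
    ∃ T ≤ M, T ≠ 0 ∧ Multiset.card T ≤ k ∧ T.sum = 0 := by
  by_cases hcard : Multiset.card M ≤ k
  · exact ⟨M, le_refl M, hM, hcard, hs⟩
  push_neg at hcard
  by_cases hp1 : 1 ≤ p
  · -- main case: use ordering + pigeonhole
    obtain ⟨l, hl, hpre⟩ := order_lemma p q hp1 hq (Multiset.card M) M rfl hb 0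
      (by omega) hq (by omega)
    simp only [zero_add] at hpre
    have hlen : l.length = Multiset.card M := by rw [← Multiset.coe_card, hl]
    -- pigeonhole
    have hmaps : ∀ t ∈ Finset.range (k + 1), (l.take t).sum ∈ Finset.Icc (1 - p) q := by
      intro t _
      exact Finset.mem_Icc.mpr ⟨(hpre t).1, (hpre t).2⟩
    have hcards : (Finset.Icc (1 - p) q).card < (Finset.range (k + 1)).card := by
      rw [Int.card_Icc, Finset.card_range]
      omega
    obtain ⟨x, hx, y, hy, hxy, hfxy⟩ :=
      Finset.exists_ne_map_eq_of_card_lt_of_maps_to hcards hmaps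
    simp only [Finset.mem_range] at hx hy
    -- wlog x < y via helper
    have block : ∀ a b : ℕ, a < b → b ≤ k →
        (l.take a).sum = (l.take b).sum →
        ∃ T ≤ M, T ≠ 0 ∧ Multiset.card T ≤ k ∧ T.sum = 0 := by
      intro a b hab hbk hsum
      set tl := (l.drop a).take (b - a) with htl
      have hsub : tl.Sublist l := ((l.drop a).take_sublist (b-a)).trans (l.drop_sublist a)
      have hTle : (tl : Multiset ℤ) ≤ M := by
        rw [← hl]
        exact Multiset.coe_le.mpr hsub.subperm
      have hlt : tl.length = b - a := by
        rw [htl, List.length_take, List.length_drop]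
        omega
      have htake : l.take b = l.take a ++ tl := by
        rw [htl, ← List.take_add]
        congr 1
        omega
      have hsumtl : tl.sum = 0 := by
        have : (l.take b).sum = (l.take a).sum + tl.sum := by
          rw [htake, List.sum_append]
        omega
      refine ⟨(tl : Multiset ℤ), hTle, ?_, ?_, by simpa using hsumtl⟩
      · rw [← Multiset.card_pos, Multiset.coe_card, hlt]
        omega
      · rw [Multiset.coe_card, hlt]
        omega
    rcases hxy.lt_or_gt with h | h
    · exact block x y h (by omega) hfxy
    · exact block y x h (by omega) hfxy.symm
  · -- p = 0 : all elements are 0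
    have hp0 : p = 0 := by omega
    obtain ⟨a, ha⟩ := Multiset.exists_mem_of_ne_zero hM
    have ha0 : a = 0 := by
      have h1 : 0 ≤ a := by have := (hb a ha).1; omega
      have h2 : 0 ≤ (M.erase a).sum := Multiset.sum_nonneg (fun x hx => by
        have := (hb x (Multiset.mem_of_mem_erase hx)).1; omega)
      have h3 : a + (M.erase a).sum = M.sum := by
        conv_rhs => rw [← Multiset.cons_erase ha]
        simp
      omega
    refine ⟨{a}, Multiset.singleton_le.mpr ha, by simp, by simp; omega, by simp [ha0]⟩

lemma key_mu (k : ℕ) (hk : 1 ≤ k) (j μ : ℤ) (hjμ : j ≤ μ) (hμj : μ ≤ j + k)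
    (L : Multiset ℤ) (hL : L ≠ 0) (hb : ∀ x ∈ L, j ≤ x ∧ x ≤ j + k)
    (hs : L.sum = μ * Multiset.card L) :
    ∃ T ≤ L, T ≠ 0 ∧ Multiset.card T ≤ k ∧ T.sum = μ * Multiset.card T := by
  set M := L.map (fun x => x - μ) with hM
  have hMne : M ≠ 0 := by simpa [hM] using hL
  have hMsum : M.sum = 0 := by
    rw [hM, Multiset.sum_map_sub]
    simp only [Multiset.map_id']
    rw [Multiset.map_const', Multiset.sum_replicate, hs]
    simp [nsmul_eq_mul, mul_comm]
  have hMb : ∀ x ∈ M, -(μ - j) ≤ x ∧ x ≤ j + k - μ := by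
    intro x hx
    rw [hM, Multiset.mem_map] at hx
    obtain ⟨y, hy, rfl⟩ := hx
    have := hb y hy
    omega
  obtain ⟨T', hT'le, hT'ne, hT'card, hT'sum⟩ :=
    key_zero k hk (μ - j) (j + k - μ) (by omega) (by omega) (by omega) M hMne hMb hMsum
  refine ⟨T'.map (fun x => x + μ), ?_, by simpa using hT'ne, by simpa using hT'card, ?_⟩
  · have h1 : (T'.map (fun x => x + μ)) ≤ M.map (fun x => x + μ) :=
      Multiset.map_le_map hT'le
    have h2 : M.map (fun x => x + μ) = L := by
      rw [hM, Multiset.map_map]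
      simp
    rwa [h2] at h1
  · have heq : T'.map (fun x => x + μ) = T'.map (fun x => (fun y => y) x + (fun _ => μ) x) := rfl
    rw [heq, Multiset.sum_map_add]
    simp [hT'sum, nsmul_eq_mul, mul_comm]

theorem statement_11 (j : ℤ) (k : ℕ) (hk : 1 ≤ k)
    (L : Multiset ℤ) (hL : L ≠ 0)
    (hbound : ∀ x ∈ L, j ≤ x ∧ x ≤ j + (k : ℤ))
    (μ : ℤ) (hμ : L.sum = μ * (L.card : ℤ)) :
    ∃ (ℓ : ℕ) (S : Fin ℓ → Multiset ℤ),
      (∀ i, S i ≠ 0) ∧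
      (∑ i, S i) = L ∧
      (∀ i, (S i).card ≤ k ∧ (S i).sum = μ * ((S i).card : ℤ)) := by
  have hcpos : 0 < Multiset.card L := Multiset.card_pos.mpr hL
  have hjμ : j ≤ μ := by
    have h1 := Multiset.card_nsmul_le_sum (fun x hx => (hbound x hx).1)
    rw [nsmul_eq_mul, hμ] at h1
    nlinarith [(Int.ofNat_lt.mpr hcpos : (0:ℤ) < Multiset.card L)]
  have hμj : μ ≤ j + k := by
    have h1 := Multiset.sum_le_card_nsmul L (j + k) (fun x hx => (hbound x hx).2)
    rw [nsmul_eq_mul, hμ] at h1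
    nlinarith [(Int.ofNat_lt.mpr hcpos : (0:ℤ) < Multiset.card L)]
  -- strong induction on card, allowing empty multiset
  suffices H : ∀ (n : ℕ) (L' : Multiset ℤ), Multiset.card L' = n →
      (∀ x ∈ L', j ≤ x ∧ x ≤ j + (k:ℤ)) → L'.sum = μ * (Multiset.card L' : ℤ) →
      ∃ (ℓ : ℕ) (S : Fin ℓ → Multiset ℤ),
        (∀ i, S i ≠ 0) ∧ (∑ i, S i) = L' ∧
        (∀ i, Multiset.card (S i) ≤ k ∧ (S i).sum = μ * (Multiset.card (S i) : ℤ)) by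
    exact H (Multiset.card L) L rfl hbound hμ
  intro n
  induction n using Nat.strong_induction_on with
  | _ n ih =>
    intro L' hcard hb hs
    by_cases hL' : L' = 0
    · refine ⟨0, Fin.elim0, fun i => i.elim0, ?_, fun i => i.elim0⟩
      simp [hL']
    · obtain ⟨T, hTle, hTne, hTcard, hTsum⟩ := key_mu k hk j μ hjμ hμj L' hL' hb hs
      have hTcpos : 0 < Multiset.card T := Multiset.card_pos.mpr hTne
      have hadd : L' - T + T = L' := tsub_add_cancel_of_le hTle
      have hcadd : Multiset.card (L' - T) + Multiset.card T = Multiset.card L' := by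
        conv_rhs => rw [← hadd]
        simp
      have hcsub : Multiset.card (L' - T) < n := by omega
      have hsub_sum : (L' - T).sum = μ * (Multiset.card (L' - T) : ℤ) := by
        have h1 : (L' - T).sum + T.sum = L'.sum := by
          conv_rhs => rw [← hadd]; simp
        have h2 : (Multiset.card (L' - T) : ℤ) = (Multiset.card L' : ℤ) - Multiset.card T := by
          push_cast [← hcadd]; ring
        rw [h2]
        rw [hs, hTsum] at h1
        ring_nf
        ring_nf at h1
        omega
      obtain ⟨ℓ', S', hS'ne, hS'sum, hS'prop⟩ := ih (Multiset.card (L' - T)) hcsub (L' - T) rfl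
        (fun x hx => hb x (Multiset.mem_of_le tsub_le_self hx)) hsub_sum
      refine ⟨ℓ' + 1, Fin.cons T S', ?_, ?_, ?_⟩
      · intro i
        refine Fin.cases ?_ ?_ i
        · simpa using hTne
        · intro i'; simpa using hS'ne i'
      · rw [Fin.sum_cons, hS'sum, add_comm]
        exact hadd
      · intro i
        refine Fin.cases ?_ ?_ i
        · simpa using ⟨hTcard, hTsum⟩
        · intro i'; simpa using hS'prop i'
end

section
/- Let F be a field, P an m×n matrix polynomial over F all of whose entries have degree at most g, and a, b, c, d ∈ F with ad − bc ≠ 0. Let χ ∈ F[λ] be irreducible, and let M_A(χ) be its Möbius transform taken with grade equal to deg χ; assume M_A(χ) is nonconstant (which holds automatically when deg χ ≥ 2). Let M_A(P) be the entrywise grade-g Möbius transform of P. Then for every j with 1 ≤ j ≤ min(m,n): some j×j minor of P is nonzero if and only if some j×j minor of M_A(P) is nonzero, and in that case the multiplicity of χ in D_j(P) equals the multiplicity of M_A(χ) in D_j(M_A(P)). -/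
/-!
Under grade-`g` homogenization `p ↦ Σ pᵢ xⁱ y^(g-i)`, the Möbius transform is the linear change
of variables `(x, y) ↦ (a x + b y, c x + d y)` followed by setting `y = 1`. Hence it is
multiplicative on polynomials of bounded degree, commutes with determinants, composes like the
matrices, and the transform by the adjugate of `A` inverts it up to the unit `(ad - bc)^g`.
Consequently `χ^t` divides a `j × j` minor of `P` exactly when `M_A(χ)^t` divides the
corresponding minor of `M_A(P)`, so both multiplicities are suprema of the same set.
-/

open Polynomial

/-- The grade-`g` Möbius transform of a polynomial `p` with respect to
`A = [[a, b], [c, d]]`. -/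
noncomputable def mobius {F : Type*} [Field F] (a b c d : F) (g : ℕ) (p : F[X]) : F[X] :=
  ∑ i ∈ Finset.range (g + 1),
    C (p.coeff i) * (C a * X + C b) ^ i * (C c * X + C d) ^ (g - i)

theorem Polynomial.homogenize_pow {R : Type*} [CommSemiring R] {n : ℕ} {p : R[X]}
    (hp : p.natDegree ≤ n) (t : ℕ) : (p ^ t).homogenize (t * n) = p.homogenize n ^ t := by
  simpa using homogenize_finsetProd (s := Finset.range t) (p := fun _ => p) (n := fun _ => n)
    fun _ _ => hp

theorem Polynomial.homogenize_det {R ι : Type*} [CommRing R] [Fintype ι] [DecidableEq ι]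
    {g : ℕ} (Q : Matrix ι ι R[X]) (hQ : ∀ i k, (Q i k).natDegree ≤ g) :
    Q.det.homogenize (Fintype.card ι * g) = (Q.map (homogenize · g)).det := by
  simp only [Matrix.det_apply, homogenize_finsetSum, Units.smul_def, homogenize_smul]
  refine Finset.sum_congr rfl fun σ _ => ?_
  simpa using congrArg ((σ.sign : ℤ) • ·) (homogenize_finsetProd (s := Finset.univ)
    (p := fun i => Q (σ i) i) (n := fun _ => g) fun _ _ => hQ _ _)

theorem Matrix.natDegree_det_le {R ι : Type*} [CommRing R] [Fintype ι] [DecidableEq ι]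
    {g : ℕ} (Q : Matrix ι ι R[X]) (hQ : ∀ i k, (Q i k).natDegree ≤ g) :
    Q.det.natDegree ≤ Fintype.card ι * g := by
  rw [Matrix.det_apply]
  refine natDegree_sum_le_of_forall_le _ _ fun σ _ => (natDegree_smul_le _ _).trans ?_
  refine (natDegree_prod_le _ _).trans ?_
  simpa using Finset.sum_le_card_nsmul Finset.univ _ g fun i _ => hQ (σ i) i

section Mobius

variable {F : Type*} [Field F]

theorem mobius_eq_aeval_homogenize (a b c d : F) (g : ℕ) (p : F[X]) :
    mobius a b c d g p = MvPolynomial.aeval ![C a * X + C b, C c * X + C d] (p.homogenize g) := by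
  rw [homogenize, map_sum, Finset.Nat.sum_antidiagonal_eq_sum_range_succ_mk, mobius]
  refine Finset.sum_congr rfl fun i _ => ?_
  simp [MvPolynomial.aeval_monomial, Finsupp.prod_fintype, Fin.prod_univ_two, C_eq_algebraMap,
    mul_assoc]

theorem mobius_zero (a b c d : F) (g : ℕ) : mobius a b c d g 0 = 0 := by
  simp [mobius_eq_aeval_homogenize]

theorem mobius_one (a b c d : F) (g : ℕ) : mobius a b c d g 1 = (C c * X + C d) ^ g := by
  simp [mobius_eq_aeval_homogenize]

theorem natDegree_mobius_le (a b c d : F) (g : ℕ) (p : F[X]) :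
    (mobius a b c d g p).natDegree ≤ g := by
  refine natDegree_sum_le_of_forall_le _ _ fun i hi => ?_
  have hi : i ≤ g := Nat.lt_succ_iff.mp (Finset.mem_range.mp hi)
  have h := natDegree_mul_le_of_le
    ((natDegree_C_mul_le (p.coeff i) _).trans
      (natDegree_pow_le_of_le i (natDegree_linear_le (a := a) (b := b))))
    (natDegree_pow_le_of_le (g - i) (natDegree_linear_le (a := c) (b := d)))
  omega

theorem mobius_mul (a b c d : F) {g₁ g₂ : ℕ} {p q : F[X]} (hp : p.natDegree ≤ g₁)
    (hq : q.natDegree ≤ g₂) :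
    mobius a b c d (g₁ + g₂) (p * q) = mobius a b c d g₁ p * mobius a b c d g₂ q := by
  simp only [mobius_eq_aeval_homogenize, homogenize_mul p q hp hq, map_mul]

theorem mobius_pow (a b c d : F) {n : ℕ} {p : F[X]} (hp : p.natDegree ≤ n) (t : ℕ) :
    mobius a b c d (t * n) (p ^ t) = mobius a b c d n p ^ t := by
  rw [mobius_eq_aeval_homogenize, homogenize_pow hp, map_pow, mobius_eq_aeval_homogenize]

noncomputable def linearSubst (a b c d : F) : Fin 2 → MvPolynomial (Fin 2) F :=
  ![.C a * .X 0 + .C b * .X 1, .C c * .X 0 + .C d * .X 1]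

theorem isHomogeneous_linearSubst (a b c d : F) (i : Fin 2) :
    (linearSubst a b c d i).IsHomogeneous 1 := by
  fin_cases i <;>
    exact (MvPolynomial.isHomogeneous_C_mul_X _ 0).add (MvPolynomial.isHomogeneous_C_mul_X _ 1)

theorem homogenize_mobius (a b c d : F) (g : ℕ) (p : F[X]) :
    (mobius a b c d g p).homogenize g =
      MvPolynomial.bind₁ (linearSubst a b c d) (p.homogenize g) := by
  refine homogenize_eq_of_isHomogeneous ?_ ?_
  · simpa using (isHomogeneous_homogenize p).aeval _ (isHomogeneous_linearSubst a b c d)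
  · rw [MvPolynomial.aeval_bind₁, mobius_eq_aeval_homogenize]
    congr 2
    funext i
    fin_cases i <;> simp [linearSubst, C_eq_algebraMap]

theorem mobius_mobius (a b c d a' b' c' d' : F) (g : ℕ) (p : F[X]) :
    mobius a' b' c' d' g (mobius a b c d g p) =
      mobius (a * a' + b * c') (a * b' + b * d') (c * a' + d * c') (c * b' + d * d') g p := by
  rw [mobius_eq_aeval_homogenize, homogenize_mobius, MvPolynomial.aeval_bind₁,
    mobius_eq_aeval_homogenize]
  congr 2
  funext i
  fin_cases i <;> simp [linearSubst, Polynomial.algebraMap_eq] <;> ring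

theorem mobius_diag (k : F) {g : ℕ} {p : F[X]} (hp : p.natDegree ≤ g) :
    mobius k 0 0 k g p = C (k ^ g) * p := by
  conv_rhs => rw [p.as_sum_range' (g + 1) (Nat.lt_succ_of_le hp), Finset.mul_sum]
  refine Finset.sum_congr rfl fun i hi => ?_
  rw [← C_mul_X_pow_eq_monomial,
    ← pow_sub_mul_pow k (Nat.le_of_lt_succ (Finset.mem_range.mp hi))]
  simp only [map_zero, add_zero, zero_mul, zero_add, mul_pow, C_mul, C_pow]
  ring

theorem mobius_adjugate_mobius (a b c d : F) {g : ℕ} {p : F[X]} (hp : p.natDegree ≤ g) :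
    mobius d (-b) (-c) a g (mobius a b c d g p) = C ((a * d - b * c) ^ g) * p := by
  rw [mobius_mobius, ← mobius_diag _ hp]
  congr 1 <;> ring

theorem mobius_eq_zero_iff {a b c d : F} (hA : a * d - b * c ≠ 0) {g : ℕ} {p : F[X]}
    (hp : p.natDegree ≤ g) : mobius a b c d g p = 0 ↔ p = 0 := by
  refine ⟨fun h => ?_, fun h => h ▸ mobius_zero a b c d g⟩
  have h' := mobius_adjugate_mobius a b c d hp
  rw [h, mobius_zero] at h'
  exact (mul_eq_zero.mp h'.symm).resolve_left (C_ne_zero.mpr (pow_ne_zero g hA))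

theorem mobius_natDegree_dvd_mobius (a b c d : F) {G : ℕ} {p q : F[X]} (h : p ∣ q)
    (hq : q.natDegree ≤ G) : mobius a b c d p.natDegree p ∣ mobius a b c d G q := by
  obtain ⟨r, rfl⟩ := h
  rcases eq_or_ne (p * r) 0 with h0 | h0
  · rw [h0, mobius_zero]
    exact dvd_zero _
  rw [natDegree_mul (left_ne_zero_of_mul h0) (right_ne_zero_of_mul h0)] at hq
  rw [← Nat.add_sub_cancel' (le_of_add_le_left hq), mobius_mul a b c d le_rfl (by omega)]
  exact dvd_mul_right _ _

theorem associated_mobius_adjugate_mobius {a b c d : F} (hA : a * d - b * c ≠ 0) {χ : F[X]}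
    (hχ : Irreducible χ) (hMχ : 0 < (mobius a b c d χ.natDegree χ).natDegree) :
    Associated χ (mobius d (-b) (-c) a (mobius a b c d χ.natDegree χ).natDegree
      (mobius a b c d χ.natDegree χ)) := by
  generalize hn : χ.natDegree = n at hMχ ⊢
  generalize hM : mobius a b c d n χ = Mχ at hMχ ⊢
  have hdeg : Mχ.natDegree ≤ n := hM ▸ natDegree_mobius_le a b c d n χ
  have key : C ((a * d - b * c) ^ n) * χ =
      mobius d (-b) (-c) a Mχ.natDegree Mχ * (C (-c) * X + C a) ^ (n - Mχ.natDegree) := by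
    rw [← mobius_one d (-b),
      ← mobius_mul _ _ _ _ le_rfl (natDegree_one.trans_le (Nat.zero_le _)), mul_one,
      Nat.add_sub_cancel' hdeg, ← hM, mobius_adjugate_mobius a b c d hn.le]
  have hunit : IsUnit (C ((a * d - b * c) ^ n)) := isUnit_C.mpr (pow_ne_zero n hA).isUnit
  refine associated_of_dvd_dvd ?_ (hunit.dvd_mul_left.mp (key ▸ dvd_mul_right _ _))
  refine (hχ.prime.dvd_or_dvd (key ▸ dvd_mul_left χ _)).resolve_right fun hdvd => ?_
  -- the exponent is positive only if `n ≥ 2`, and then `χ` cannot divide `-c X + a`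
  have hlin : (C (-c) * X + C a : F[X]) ≠ 0 := fun h => hA <| by
    have h1 : -c = 0 := by simpa using congrArg (coeff · 1) h
    have h0 : a = 0 := by simpa using congrArg (coeff · 0) h
    simp [neg_eq_zero.mp h1, h0]
  rcases Nat.eq_zero_or_pos (n - Mχ.natDegree) with h | h
  · rw [h, pow_zero] at hdvd
    exact hχ.not_isUnit (isUnit_of_dvd_one hdvd)
  · have := natDegree_le_of_dvd (hχ.prime.dvd_of_dvd_pow hdvd) hlin
    have := natDegree_linear_le (a := -c) (b := a)
    omega

theorem pow_dvd_iff_mobius_pow_dvd {a b c d : F} (hA : a * d - b * c ≠ 0) {χ : F[X]}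
    (hχ : Irreducible χ) (hMχ : 0 < (mobius a b c d χ.natDegree χ).natDegree)
    {G : ℕ} {q : F[X]} (hq : q.natDegree ≤ G) (t : ℕ) :
    χ ^ t ∣ q ↔ mobius a b c d χ.natDegree χ ^ t ∣ mobius a b c d G q := by
  constructor
  · intro h
    simpa [natDegree_pow, mobius_pow a b c d le_rfl] using mobius_natDegree_dvd_mobius a b c d h hq
  · intro h
    have h' := mobius_natDegree_dvd_mobius d (-b) (-c) a h (natDegree_mobius_le a b c d G q)
    rw [natDegree_pow, mobius_pow _ _ _ _ le_rfl, mobius_adjugate_mobius a b c d hq] at h'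
    exact (isUnit_C.mpr (pow_ne_zero G hA).isUnit).dvd_mul_left.mp
      (((associated_mobius_adjugate_mobius hA hχ hMχ).pow_pow).dvd.trans h')

theorem mobius_det (a b c d : F) {ι : Type*} [Fintype ι] [DecidableEq ι] {g : ℕ}
    (Q : Matrix ι ι F[X]) (hQ : ∀ i k, (Q i k).natDegree ≤ g) :
    (Q.map (mobius a b c d g)).det = mobius a b c d (Fintype.card ι * g) Q.det := by
  rw [mobius_eq_aeval_homogenize, homogenize_det Q hQ, AlgHom.map_det]
  congr 1
  ext i k
  simp [mobius_eq_aeval_homogenize]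

end Mobius

theorem dvd_minorGcd_iff {F : Type*} [Field F] {m n j : ℕ} (x : F[X])
    (P : Matrix (Fin m) (Fin n) F[X]) :
    x ∣ minorGcd j P ↔
      ∀ (r : Fin j → Fin m) (c : Fin j → Fin n), x ∣ (P.submatrix r c).det := by
  simp [minorGcd, Finset.dvd_gcd_iff]

theorem statement_14 {F : Type*} [Field F] {m n : ℕ}
    (P : Matrix (Fin m) (Fin n) F[X]) (g : ℕ)
    (hdeg : ∀ i j, (P i j).degree ≤ (g : WithBot ℕ))
    (a b c d : F) (hA : a * d - b * c ≠ 0)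
    (χ : F[X]) (hχ : Irreducible χ)
    (hMχ : 0 < (mobius a b c d χ.natDegree χ).natDegree) :
    ∀ j : ℕ, 1 ≤ j → j ≤ m → j ≤ n →
      ((∃ (r : Fin j → Fin m) (cc : Fin j → Fin n), (P.submatrix r cc).det ≠ 0) ↔
        (∃ (r : Fin j → Fin m) (cc : Fin j → Fin n),
          ((Matrix.of fun i j' => mobius a b c d g (P i j')).submatrix r cc).det ≠ 0)) ∧
      ((∃ (r : Fin j → Fin m) (cc : Fin j → Fin n), (P.submatrix r cc).det ≠ 0) →
        polyMult χ (minorGcd j P)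
          = polyMult (mobius a b c d χ.natDegree χ)
              (minorGcd j (Matrix.of fun i j' => mobius a b c d g (P i j')))) := by
  intro j _ _ _
  have hentry (r : Fin j → Fin m) (cc : Fin j → Fin n) (i k : Fin j) :
      ((P.submatrix r cc) i k).natDegree ≤ g :=
    natDegree_le_iff_degree_le.mpr (hdeg _ _)
  have hminor (r : Fin j → Fin m) (cc : Fin j → Fin n) :
      ((Matrix.of fun i j' => mobius a b c d g (P i j')).submatrix r cc).det =
        mobius a b c d (j * g) (P.submatrix r cc).det := by
    have h := mobius_det a b c d (P.submatrix r cc) (hentry r cc)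
    rw [Fintype.card_fin] at h
    exact h
  have hdegMinor (r : Fin j → Fin m) (cc : Fin j → Fin n) :
      (P.submatrix r cc).det.natDegree ≤ j * g := by
    simpa using Matrix.natDegree_det_le _ (hentry r cc)
  refine ⟨exists_congr fun r => exists_congr fun cc => ?_, fun _ => ?_⟩
  · rw [hminor, Ne, Ne, mobius_eq_zero_iff hA (hdegMinor r cc)]
  · unfold polyMult
    congr 1
    ext t
    simp only [Set.mem_ofPred_eq, dvd_minorGcd_iff, hminor,
      pow_dvd_iff_mobius_pow_dvd hA hχ hMχ (hdegMinor _ _)]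
end
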